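/- arXiv:1604.02489 — 5 statements merged into one kernel-verified Lean document; each statement's English description precedes it below -/
import Mathlib

section
/- For any k, d ∈ ℕ and ε > 0 there exists r = r(k,d,ε) ∈ ℕ such that for any polynomial mappings φ_1,…,φ_k ∈ Pol⁰_d([r], 𝕋) there exists a nonempty finite set α ⊆ [r] such that dist(φ_i(α), 0) < ε for all i ∈ {1,…,k}. -/
open Finset

/-- The `β`-derivative of a map `φ : F(A) → H`: `D_β φ (α) = φ(α ∪ β) - φ(α)`. -/
def fsDeriv {ι H : Type*} [DecidableEq ι] [AddCommGroup H]
    (φ : Finset ι → H) (β : Finset ι) : Finset ι → H :=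
  fun α => φ (α ∪ β) - φ α

/-- Iterated derivative `D_{β 0} ⋯ D_{β (n-1)} φ`. -/
def iterDeriv {ι H : Type*} [DecidableEq ι] [AddCommGroup H] :
    {n : ℕ} → (Finset ι → H) → (Fin n → Finset ι) → (Finset ι → H)
  | 0, φ, _ => φ
  | _ + 1, φ, β => iterDeriv (fsDeriv φ (β 0)) (fun i => β i.succ)

/-- `φ : F(A) → H` is polynomial of degree ≤ d: any d+1 pairwise disjoint
derivatives (by finite subsets of `A`) kill `φ` on `F(A)` away from them. -/
def IsPolyDeg {ι H : Type*} [DecidableEq ι] [AddCommGroup H]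
    (A : Finset ι) (d : ℕ) (φ : Finset ι → H) : Prop :=
  ∀ β : Fin (d + 1) → Finset ι, (∀ i, β i ⊆ A) →
    (∀ i j, i ≠ j → Disjoint (β i) (β j)) →
    ∀ α : Finset ι, α ⊆ A → (∀ i, Disjoint α (β i)) → iterDeriv φ β α = 0

/-- `Pol⁰_d(A,H)`: polynomial maps of degree ≤ d vanishing at `∅`. -/
def Pol0 {ι H : Type*} [DecidableEq ι] [AddCommGroup H]
    (A : Finset ι) (d : ℕ) (φ : Finset ι → H) : Prop :=
  IsPolyDeg A d φ ∧ φ (∅ : Finset ι) = 0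

/-- `‖x‖`: the distance from a real number `x` to `ℤ`. -/
noncomputable def distToInt (x : ℝ) : ℝ := |x - round x|

/-!
Colour each finite set `α` by the nearest points of a finite `δ`-net to `φ_1(α), …, φ_k(α)`.
The finite unions theorem provides disjoint blocks `B_0, …, B_d ⊆ [r]` on all of whose nonempty
unions every `φ_i` is `δ`-close to one point `x_i`. Expanding the vanishing derivative
`D_{B_d} ⋯ D_{B_0} φ_i (∅)` and using `φ_i(∅) = 0` writes `x_i` as a signed sum of the
`2^(d+1) - 1` small differences `φ_i(⋃_S B) - x_i`, so `x_i`, hence `φ_i(B_0)`, is small.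
The finite unions theorem is Hindman's theorem for sums of distinct singletons in `Multiset ℕ`,
made finitary by passing to a limit colouring along an ultrafilter.
-/

open Function

theorem Finset.powerset_map {α β : Type*} (f : α ↪ β) (s : Finset α) :
    (s.map f).powerset = s.powerset.map (mapEmbedding f).toEmbedding := by
  ext T
  simp [subset_map_iff, eq_comm]

theorem Fin.sum_finset_succ {M : Type*} [AddCommMonoid M] {n : ℕ}
    (g : Finset (Fin (n + 1)) → M) :
    ∑ T, g T = ∑ S : Finset (Fin n),
      (g (S.map (Fin.succEmb n)) + g (insert 0 (S.map (Fin.succEmb n)))) := by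
  rw [← powerset_univ, Fin.univ_succ, cons_eq_insert, sum_powerset_insert (by simp), powerset_map,
    sum_map, sum_map, ← sum_add_distrib]
  rfl

theorem iterDeriv_eq_sum {ι H : Type*} [DecidableEq ι] [AddCommGroup H] {n : ℕ}
    (φ : Finset ι → H) (β : Fin n → Finset ι) (α : Finset ι) :
    iterDeriv φ β α = ∑ S : Finset (Fin n), (-1 : ℤ) ^ (n + #S) • φ (α ∪ S.biUnion β) := by
  induction n generalizing φ with
  | zero => simp [iterDeriv, Subsingleton.elim _ (∅ : Finset (Fin 0))]
  | succ n ih =>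
    rw [iterDeriv, ih, Fin.sum_finset_succ]
    refine sum_congr rfl fun S _ => ?_
    have h0 : (0 : Fin (n + 1)) ∉ S.map (Fin.succEmb n) := by simp
    rw [card_insert_of_notMem h0, biUnion_insert, card_map, map_eq_image, image_biUnion, fsDeriv]
    have hsign : (-1 : ℤ) ^ (n + 1 + #S) = -(-1) ^ (n + #S) := by ring
    have hsign' : (-1 : ℤ) ^ (n + 1 + (#S + 1)) = (-1) ^ (n + #S) := by ring
    simp only [hsign, hsign', Fin.coe_succEmb, union_assoc, union_comm (β 0), neg_smul, smul_sub]
    abel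

theorem norm_neg_one_pow_zsmul {H : Type*} [SeminormedAddCommGroup H] (k : ℕ) (y : H) :
    ‖(-1 : ℤ) ^ k • y‖ = ‖y‖ := by
  rcases neg_one_pow_eq_or ℤ k with h | h <;> simp [h]

theorem norm_le_sum_norm_sub_of_sum_neg_one_pow_smul_eq_zero {H : Type*}
    [SeminormedAddCommGroup H] {n : ℕ} (f : Finset (Fin (n + 1)) → H)
    (hf : ∑ S, (-1 : ℤ) ^ (n + 1 + #S) • f S = 0) (hf₀ : f ∅ = 0) (x : H) :
    ‖x‖ ≤ ∑ S ∈ univ.erase ∅, ‖f S - x‖ := by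
  have hsigns : ∑ S : Finset (Fin (n + 1)), (-1 : ℤ) ^ (n + 1 + #S) = 0 := by
    simp_rw [pow_add _ (n + 1), ← mul_sum, ← powerset_univ,
      sum_powerset_neg_one_pow_card_of_nonempty univ_nonempty, mul_zero]
  -- as the signs sum to zero, `f S - x` satisfies the same relation, and its `∅`-term is `-x`
  have hsum : ∑ S, (-1 : ℤ) ^ (n + 1 + #S) • (f S - x) = 0 := by
    simp only [smul_sub, sum_sub_distrib, hf, ← sum_smul, hsigns, zero_smul, sub_zero]
  rw [← add_sum_erase _ _ (mem_univ ∅), hf₀, zero_sub] at hsum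
  calc ‖x‖ = ‖(-1 : ℤ) ^ (n + 1 + #(∅ : Finset (Fin (n + 1)))) • -x‖ := by
        rw [norm_neg_one_pow_zsmul, norm_neg]
    _ = ‖∑ S ∈ univ.erase ∅, (-1 : ℤ) ^ (n + 1 + #S) • (f S - x)‖ := by
        rw [eq_neg_of_add_eq_zero_left hsum, norm_neg]
    _ ≤ ∑ S ∈ univ.erase ∅, ‖f S - x‖ :=
        (norm_sum_le _ _).trans_eq (sum_congr rfl fun S _ => norm_neg_one_pow_zsmul _ _)

theorem Pol0.norm_apply_biUnion_le {ι H : Type*} [DecidableEq ι] [SeminormedAddCommGroup H]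
    {A : Finset ι} {d : ℕ} {φ : Finset ι → H} (hφ : Pol0 A d φ) {B : Fin (d + 1) → Finset ι}
    (hBA : ∀ j, B j ⊆ A) (hB : Pairwise (Disjoint on B)) {x : H} {δ : ℝ}
    (hx : ∀ S : Finset (Fin (d + 1)), S.Nonempty → ‖φ (S.biUnion B) - x‖ ≤ δ)
    {S : Finset (Fin (d + 1))} (hS : S.Nonempty) :
    ‖φ (S.biUnion B)‖ ≤ 2 ^ (d + 1) * δ := by
  have hsum : ∑ T, (-1 : ℤ) ^ (d + 1 + #T) • φ (T.biUnion B) = 0 := by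
    simpa [iterDeriv_eq_sum] using hφ.1 B hBA (fun i j hij => hB hij) ∅ (empty_subset A)
      (fun _ => disjoint_empty_left _)
  have hx' : ‖x‖ ≤ #(univ.erase (∅ : Finset (Fin (d + 1)))) * δ := by
    rw [← nsmul_eq_mul]
    exact (norm_le_sum_norm_sub_of_sum_neg_one_pow_smul_eq_zero _ hsum (by simpa using hφ.2)
      x).trans <| sum_le_card_nsmul _ _ _ fun T hT =>
        hx T (nonempty_iff_ne_empty.2 (ne_of_mem_erase hT))
  have hcard : (#(univ.erase (∅ : Finset (Fin (d + 1)))) : ℝ) + 1 = 2 ^ (d + 1) := by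
    exact_mod_cast card_erase_add_one (mem_univ _) |>.trans (by simp)
  calc ‖φ (S.biUnion B)‖ ≤ ‖φ (S.biUnion B) - x‖ + ‖x‖ := norm_le_norm_sub_add _ _
    _ ≤ δ + #(univ.erase ∅) * δ := add_le_add (hx S hS) hx'
    _ = 2 ^ (d + 1) * δ := by rw [← hcard]; ring

theorem Ultrafilter.exists_eventually_eq_of_finite {α C : Type*} [Finite C] (U : Ultrafilter α)
    (f : α → C) : ∃ c, ∀ᶠ x in U, f x = c := by
  obtain ⟨c, hc⟩ := (U.map f).eq_pure_of_finite
  exact ⟨c, Ultrafilter.mem_map.1 (hc ▸ Ultrafilter.mem_pure.2 rfl : {c} ∈ U.map f)⟩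

namespace Hindman

theorem exists_finset_sum_eq_of_mem_FS {M : Type*} [AddCommMonoid M] {a : Stream' M} {m : M}
    (hm : m ∈ FS a) : ∃ s : Finset ℕ, s.Nonempty ∧ ∑ i ∈ s, a.get i = m := by
  induction hm with
  | head' a => exact ⟨{0}, singleton_nonempty 0, sum_singleton _ _⟩
  | tail' a m _ ih =>
    obtain ⟨s, hs, rfl⟩ := ih
    exact ⟨s.map (addRightEmbedding 1), hs.map, by simp⟩
  | cons' a m _ ih =>
    obtain ⟨s, hs, rfl⟩ := ih
    refine ⟨cons 0 (s.map (addRightEmbedding 1)) (by simp), cons_nonempty _, ?_⟩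
    simp [Stream'.head]

theorem nodup_and_ne_zero_of_mem_FS_singleton {m : Multiset ℕ} (hm : m ∈ FS (fun i => {i})) :
    m.Nodup ∧ m ≠ 0 := by
  obtain ⟨s, hs, rfl⟩ := exists_finset_sum_eq_of_mem_FS hm
  rw [show ∑ i ∈ s, Stream'.get (fun i => ({i} : Multiset ℕ)) i = s.val from
    sum_multiset_singleton s]
  exact ⟨s.nodup, by simpa [← val_eq_zero] using hs.ne_empty⟩

end Hindman

def IsMonochromaticUnions {C : Type*} {m : ℕ} (χ : Finset ℕ → C) (A : Fin m → Finset ℕ) : Prop :=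
  (∀ j, (A j).Nonempty) ∧ Pairwise (Disjoint on A) ∧
    ∃ c, ∀ S : Finset (Fin m), S.Nonempty → χ (S.biUnion A) = c

open Hindman in
theorem exists_isMonochromaticUnions (m : ℕ) {C : Type*} [Finite C] (χ : Finset ℕ → C) :
    ∃ A : Fin m → Finset ℕ, IsMonochromaticUnions χ A := by
  obtain ⟨-, ⟨c, rfl⟩, b, hb⟩ := FS_partition_regular (fun i => ({i} : Multiset ℕ))
    (Set.range fun c => FS (fun i => {i}) ∩ {x | χ x.toFinset = c}) (Set.finite_range _)
    fun x hx => Set.mem_sUnion.2 ⟨_, ⟨χ x.toFinset, rfl⟩, hx, rfl⟩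
  have hb' : ∀ x ∈ FS b, x.Nodup ∧ x ≠ 0 :=
    fun x hx => nodup_and_ne_zero_of_mem_FS_singleton (hb hx).1
  refine ⟨fun j => (b.get j).toFinset, fun j => ?_, ?_, c, fun S hS => ?_⟩
  · exact Multiset.toFinset_nonempty.2 (hb' _ (FS.singleton b j)).2
  · -- `b i + b j` is again a sum of distinct singletons, so it has no repeated element
    refine (pairwise_disjoint_on _).2 fun i j hij => Multiset.disjoint_toFinset.2 ?_
    exact (Multiset.nodup_add.1 (hb' _ (FS.add_two b i j hij)).1).2.2
  · have hS' : χ (∑ i ∈ S.map Fin.valEmbedding, b.get i).toFinset = c :=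
      (hb (FS.finsetSum b _ hS.map)).2
    convert hS' using 2
    ext
    simp [Multiset.mem_sum]

theorem exists_bound_isMonochromaticUnions (m : ℕ) (C : Type*) [Finite C] :
    ∃ N : ℕ, ∀ χ : Finset ℕ → C, ∃ A : Fin m → Finset ℕ,
      (∀ j, A j ⊆ Icc 1 N) ∧ IsMonochromaticUnions χ A := by
  by_contra! h
  choose χ hχ using h
  choose χlim hχlim using fun α => (Filter.hyperfilter ℕ).exists_eventually_eq_of_finite (χ · α)
  obtain ⟨A, hAne, hAdisj, c, hc⟩ :=
    exists_isMonochromaticUnions m fun α => χlim (α.image Nat.succ)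
  obtain ⟨M, hM⟩ := (univ.biUnion A).exists_nat_subset_range
  have hev : ∀ᶠ N in Filter.hyperfilter ℕ, M ≤ N ∧ ∀ S : Finset (Fin m),
      χ N ((S.biUnion A).image Nat.succ) = χlim ((S.biUnion A).image Nat.succ) :=
    ((Nat.cofinite_eq_atTop ▸ Filter.eventually_ge_atTop M).filter_mono
      Filter.hyperfilter_le_cofinite).and (Filter.eventually_all.2 fun S => hχlim _)
  obtain ⟨N, hMN, hN⟩ := hev.exists
  refine hχ N (fun j => (A j).image Nat.succ) (fun j => ?_)
    ⟨fun j => (hAne j).image _, fun i j hij => (disjoint_image Nat.succ_injective).2 (hAdisj hij),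
      c, fun S hS => ?_⟩
  · intro a ha
    obtain ⟨a, haA, rfl⟩ := mem_image.1 ha
    have := mem_range.1 (hM (mem_biUnion.2 ⟨j, mem_univ j, haA⟩))
    exact mem_Icc.2 ⟨by omega, by omega⟩
  · rw [← biUnion_image, hN]
    exact hc S hS

/-- Proposition (cf. [B], Theorem 7.7): for any k, d ∈ ℕ and ε > 0 there is r such
that any k polynomial mappings in `Pol⁰_d([r], 𝕋)` (𝕋 = ℝ/ℤ) simultaneously come
ε-close to 0 at some nonempty α ⊆ [r]. -/
theorem pol0_torus_simultaneous_recurrence (k d : ℕ) (ε : ℝ) (hε : 0 < ε) :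
    ∃ r : ℕ, ∀ φ : Fin k → (Finset ℕ → UnitAddCircle),
      (∀ i, Pol0 (Finset.Icc 1 r) d (φ i)) →
      ∃ α : Finset ℕ, α.Nonempty ∧ α ⊆ Finset.Icc 1 r ∧
        ∀ i, dist (φ i α) 0 < ε := by
  set δ := ε / 2 ^ (d + 1) / 2
  obtain ⟨net, -, hnet_fin, hnet⟩ :=
    finite_cover_balls_of_compact (isCompact_univ (X := UnitAddCircle)) (by positivity : 0 < δ)
  have : Finite net := hnet_fin.to_subtype
  have hnear : ∀ y : UnitAddCircle, ∃ p : net, ‖y - p‖ < δ := fun y => by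
    simpa [dist_eq_norm] using hnet (Set.mem_univ y)
  choose nearest hnearest using hnear
  obtain ⟨r, hr⟩ := exists_bound_isMonochromaticUnions (d + 1) (Fin k → net)
  refine ⟨r, fun φ hφ => ?_⟩
  obtain ⟨B, hBr, hBne, hBdisj, c, hc⟩ := hr fun α i => nearest (φ i α)
  refine ⟨B 0, hBne 0, hBr 0, fun i => ?_⟩
  have hclose (S : Finset (Fin (d + 1))) (hS : S.Nonempty) : ‖φ i (S.biUnion B) - c i‖ ≤ δ :=
    congrFun (hc S hS) i ▸ (hnearest _).le
  calc dist (φ i (B 0)) 0 = ‖φ i (({0} : Finset (Fin (d + 1))).biUnion B)‖ := by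
        rw [dist_zero_right, singleton_biUnion]
    _ ≤ 2 ^ (d + 1) * δ := (hφ i).norm_apply_biUnion_le hBr hBdisj hclose (singleton_nonempty 0)
    _ = ε / 2 := by simp only [δ]; field_simp
    _ < ε := half_lt_self hε
end

section
/- For any k, d ∈ ℕ and ε > 0 there exists r = r(k,d,ε) ∈ ℕ such that for any polynomial mappings φ_1,…,φ_k ∈ Pol⁰_d([r], ℝ) there exists a nonempty finite set α ⊆ [r] such that ‖φ_i(α)‖ < ε for all i ∈ {1,…,k}. -/
open Finset

/-!
Induction on `d`, for all finite families of maps at once; in degree `0` a map vanishing at `∅`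
vanishes everywhere. For degree `d + 1` and `k` maps, split the ground set into `N = B ^ k`
disjoint blocks, `B ≈ 2 / ε`, and choose nonempty sets `a₀, a₁, …`, one per block, in turn:
`γ ↦ φᵢ(γ ∪ U) - φᵢ(γ) - φᵢ(U)` has degree `≤ d`, so the induction hypothesis applied to these
`k (N + 1)` maps, `U` running over the unions `⋃_{m ≤ t < j} aₜ`, yields `aⱼ` for which all of
them are within `δ = ε / (2 (N + 1))` of `ℤ`. Then each `φᵢ` is additive modulo `ℤ`, up to
`N δ < ε / 2`, on unions of consecutive `aⱼ`. By pigeonhole over the `B ^ k` boxes of side `1 / B`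
in `[0, 1) ^ k`, two partial sums `(∑_{j < u} φᵢ(aⱼ))ᵢ` and `(∑_{j < v} φᵢ(aⱼ))ᵢ` agree modulo `ℤ`
up to `1 / B ≤ ε / 2`, so `α = ⋃_{u ≤ j < v} aⱼ` works.
-/

lemma distToInt_eq_norm (x : ℝ) : distToInt x = ‖(x : UnitAddCircle)‖ :=
  UnitAddCircle.norm_eq.symm

lemma distToInt_zero : distToInt 0 = 0 := by
  simp [distToInt_eq_norm]

lemma distToInt_add_le (x y : ℝ) : distToInt (x + y) ≤ distToInt x + distToInt y := by
  simpa only [distToInt_eq_norm, AddCircle.coe_add] using norm_add_le _ _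

lemma distToInt_le_abs_sub_intCast (x : ℝ) (m : ℤ) : distToInt x ≤ |x - m| := by
  have hx : ((x - m : ℝ) : UnitAddCircle) = x := by simp
  rw [distToInt_eq_norm, ← hx, ← Real.norm_eq_abs]
  exact QuotientAddGroup.norm_mk_le_norm

lemma exists_lt_distToInt_sub_lt {G : Type*} [Fintype G] {B : ℕ} (hB : 0 < B)
    (P : ℕ → G → ℝ) :
    ∃ u v, u < v ∧ v ≤ B ^ Fintype.card G ∧ ∀ i, distToInt (P v i - P u i) < 1 / B := by
  classical
  have hBpos : (0 : ℝ) < B := by exact_mod_cast hB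
  set box : ℕ → G → ℤ := fun m i => ⌊Int.fract (P m i) * B⌋
  have hbox : ∀ m ∈ range (B ^ Fintype.card G + 1),
      box m ∈ Fintype.piFinset fun _ : G => Ico (0 : ℤ) B := by
    intro m _
    simp only [Fintype.mem_piFinset, mem_Ico, box, Int.floor_nonneg, Int.floor_lt]
    refine fun i => ⟨by positivity, ?_⟩
    push_cast
    nlinarith [Int.fract_lt_one (P m i)]
  obtain ⟨m₁, hm₁, m₂, hm₂, hne, hbox_eq⟩ :=
    exists_ne_map_eq_of_card_lt_of_maps_to (by simp) hbox
  wlog h : m₁ < m₂ generalizing m₁ m₂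
  · exact this m₂ hm₂ m₁ hm₁ hne.symm hbox_eq.symm (by omega)
  refine ⟨m₁, m₂, h, by simpa [Nat.lt_succ_iff] using hm₂, fun i => ?_⟩
  have hfract := Int.abs_sub_lt_one_of_floor_eq_floor (congrFun hbox_eq i).symm
  rw [← sub_mul, abs_mul, abs_of_pos hBpos] at hfract
  calc distToInt (P m₂ i - P m₁ i)
      ≤ |P m₂ i - P m₁ i - ((⌊P m₂ i⌋ - ⌊P m₁ i⌋ : ℤ) : ℝ)| := distToInt_le_abs_sub_intCast _ _
    _ = |Int.fract (P m₂ i) - Int.fract (P m₁ i)| := by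
      rw [Int.fract, Int.fract]; push_cast; ring_nf
    _ < 1 / B := by rwa [lt_div_iff₀ hBpos]

section Polynomial

variable {ι H : Type*} [DecidableEq ι] [AddCommGroup H] {A : Finset ι} {d : ℕ}
  {φ : Finset ι → H}

lemma IsPolyDeg.mono {B : Finset ι} (h : IsPolyDeg A d φ) (hBA : B ⊆ A) : IsPolyDeg B d φ :=
  fun β hβ hdisj α hα hαβ => h β (fun i => (hβ i).trans hBA) hdisj α (hα.trans hBA) hαβ

lemma IsPolyDeg.sub_const (h : IsPolyDeg A d φ) (c : H) : IsPolyDeg A d (fun α => φ α - c) := by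
  intro β hβ hdisj α hα hαβ
  have hderiv : fsDeriv (fun α => φ α - c) (β 0) = fsDeriv φ (β 0) := by
    funext γ; simp [fsDeriv]
  simpa only [iterDeriv, hderiv] using h β hβ hdisj α hα hαβ

lemma IsPolyDeg.fsDeriv {β : Finset ι} (h : IsPolyDeg A (d + 1) φ) (hβ : β ⊆ A) :
    IsPolyDeg (A \ β) d (fsDeriv φ β) := by
  intro β' hβ' hdisj α hα hαβ'
  have hβ'β : ∀ j, Disjoint β (β' j) := fun j => disjoint_of_subset_right (hβ' j) disjoint_sdiff
  refine h (Fin.cons β β') (Fin.forall_fin_succ.2 ⟨hβ, fun j => (hβ' j).trans sdiff_subset⟩)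
    ?_ α (hα.trans sdiff_subset)
    (Fin.forall_fin_succ.2 ⟨disjoint_of_subset_left hα sdiff_disjoint, hαβ'⟩)
  refine Fin.forall_fin_succ.2 ⟨Fin.forall_fin_succ.2 ⟨fun h => (h rfl).elim, ?_⟩, fun i => ?_⟩
  · exact fun j _ => by simpa using hβ'β j
  · refine Fin.forall_fin_succ.2 ⟨by simpa using (hβ'β i).symm, fun j hij => ?_⟩
    simpa using hdisj i j (by simpa using hij)

lemma IsPolyDeg.eq_zero_of_degree_zero (h : IsPolyDeg A 0 φ) (h0 : φ ∅ = 0) {α : Finset ι}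
    (hα : α ⊆ A) : φ α = 0 := by
  simpa [iterDeriv, _root_.fsDeriv, h0] using
    h (fun _ => α) (fun _ => hα) (fun i j hij => (hij (Fin.ext (by omega))).elim) ∅
      (empty_subset A) (fun _ => disjoint_empty_left _)

end Polynomial

open Function

variable {ι : Type*} [DecidableEq ι]

lemma exists_pairwise_disjoint_subsets (r : ℕ) :
    ∀ (N : ℕ) (A : Finset ι), N * r ≤ #A →
      ∃ I : ℕ → Finset ι, (∀ j, I j ⊆ A) ∧ (∀ j < N, r ≤ #(I j)) ∧ Pairwise (Disjoint on I)
  | 0, _, _ => ⟨fun _ => ∅, fun _ => empty_subset _, by simp, fun _ _ _ => disjoint_empty_left _⟩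
  | N + 1, A, hA => by
    rw [Nat.succ_mul] at hA
    obtain ⟨S, hSA, hS⟩ := exists_subset_card_eq (le_of_add_le_right hA)
    obtain ⟨I, hIA, hI, hIdisj⟩ := exists_pairwise_disjoint_subsets r N (A \ S)
      (by rw [card_sdiff_of_subset hSA, hS]; omega)
    refine ⟨fun j => Nat.casesOn j S I, fun j => ?_, fun j hj => ?_, fun j j' hjj' => ?_⟩
    · cases j
      exacts [hSA, (hIA _).trans sdiff_subset]
    · cases j
      exacts [hS.ge, hI _ (by omega)]
    · cases j <;> cases j'
      · exact (hjj' rfl).elim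
      · exact disjoint_of_subset_right (hIA _) disjoint_sdiff
      · exact disjoint_of_subset_left (hIA _) sdiff_disjoint
      · exact hIdisj (by simpa using hjj')

lemma distToInt_biUnion_sub_sum_le (f : Finset ι → ℝ) (hf : f ∅ = 0) (a : ℕ → Finset ι)
    {δ : ℝ} {u v : ℕ} (huv : u ≤ v)
    (h : ∀ j ∈ Ico u v, distToInt (f (a j ∪ (Ico u j).biUnion a) - f (a j)
      - f ((Ico u j).biUnion a)) ≤ δ) :
    distToInt (f ((Ico u v).biUnion a) - ∑ j ∈ Ico u v, f (a j)) ≤ ((v : ℝ) - u) * δ := by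
  induction v, huv using Nat.le_induction with
  | base => simp [hf, distToInt_zero]
  | succ v huv ih =>
    have hstep := h v (by simp [huv])
    have hprev := ih fun j hj => h j (by simp at hj ⊢; omega)
    rw [Nat.Ico_succ_right_eq_insert_Ico huv, biUnion_insert, sum_insert (by simp)]
    calc _ = distToInt ((f ((Ico u v).biUnion a) - ∑ j ∈ Ico u v, f (a j))
          + (f (a v ∪ (Ico u v).biUnion a) - f (a v) - f ((Ico u v).biUnion a))) := by ring_nf
      _ ≤ _ := (distToInt_add_le _ _).trans (add_le_add hprev hstep)
      _ = _ := by push_cast; ring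

/-- `r` can serve as `r(|G|, d, ε)` in the theorem, for ground sets `A` of any type. -/
def IsNearIntBound (ι G : Type*) [DecidableEq ι] (d r : ℕ) (ε : ℝ) : Prop :=
  ∀ A : Finset ι, r ≤ #A → ∀ φ : G → Finset ι → ℝ, (∀ i, IsPolyDeg A d (φ i)) →
    (∀ i, φ i ∅ = 0) → ∃ α : Finset ι, α.Nonempty ∧ α ⊆ A ∧ ∀ i, distToInt (φ i α) < ε

lemma isNearIntBound_zero (G : Type*) {ε : ℝ} (hε : 0 < ε) : IsNearIntBound ι G 0 1 ε := by
  intro A hA φ hφ hφ0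
  obtain ⟨x, hx⟩ := card_pos.1 hA
  have hxA : {x} ⊆ A := singleton_subset_iff.2 hx
  exact ⟨{x}, singleton_nonempty x, hxA, fun i => by
    rwa [(hφ i).eq_zero_of_degree_zero (hφ0 i) hxA, distToInt_zero]⟩

lemma IsNearIntBound.exists_nearly_additive {G M : Type*} {d r : ℕ} {δ : ℝ}
    (hr : IsNearIntBound ι (G × M) d r δ) {A I : Finset ι} (hIA : I ⊆ A) (hI : r ≤ #I)
    (U : M → Finset ι) (hUA : ∀ m, U m ⊆ A) (hIU : ∀ m, Disjoint I (U m))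
    {φ : G → Finset ι → ℝ} (hφ : ∀ i, IsPolyDeg A (d + 1) (φ i)) (hφ0 : ∀ i, φ i ∅ = 0) :
    ∃ α, α.Nonempty ∧ α ⊆ I ∧ ∀ i m, distToInt (φ i (α ∪ U m) - φ i α - φ i (U m)) < δ := by
  obtain ⟨α, hα, hαI, hαδ⟩ := hr I hI (fun p γ => fsDeriv (φ p.1) (U p.2) γ - φ p.1 (U p.2))
    (fun p => (((hφ p.1).fsDeriv (hUA p.2)).sub_const _).mono (subset_sdiff.2 ⟨hIA, hIU p.2⟩))
    (fun p => by simp [fsDeriv, hφ0])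
  exact ⟨α, hα, hαI, fun i m => hαδ (i, m)⟩

lemma IsNearIntBound.exists_nearly_additive_chain {G : Type*} {d r N n : ℕ} {δ : ℝ}
    (hr : IsNearIntBound ι (G × Fin (N + 1)) d r δ) {A : Finset ι} {I : ℕ → Finset ι}
    (hIA : ∀ j, I j ⊆ A) (hI : ∀ j < N, r ≤ #(I j)) (hIdisj : Pairwise (Disjoint on I))
    {φ : G → Finset ι → ℝ} (hφ : ∀ i, IsPolyDeg A (d + 1) (φ i)) (hφ0 : ∀ i, φ i ∅ = 0)
    (hn : n ≤ N) :
    ∃ a : ℕ → Finset ι, ∀ j < n, a j ⊆ I j ∧ (a j).Nonempty ∧ ∀ i, ∀ m ≤ j,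
      distToInt (φ i (a j ∪ (Ico m j).biUnion a) - φ i (a j) - φ i ((Ico m j).biUnion a)) < δ := by
  induction n with
  | zero => exact ⟨fun _ => ∅, by simp⟩
  | succ n ih =>
    obtain ⟨a, ha⟩ := ih (by omega)
    have hUI : ∀ m : Fin (N + 1), (Ico (m : ℕ) n).biUnion a ⊆ (Ico (m : ℕ) n).biUnion I :=
      fun m => biUnion_mono fun t ht => (ha t (mem_Ico.1 ht).2).1
    obtain ⟨α, hα, hαI, hαδ⟩ := hr.exists_nearly_additive (hIA n) (hI n (by omega))
      (fun m : Fin (N + 1) => (Ico (m : ℕ) n).biUnion a)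
      (fun m => (hUI m).trans (biUnion_subset.2 fun t _ => hIA t))
      (fun m => disjoint_of_subset_right (hUI m) ((disjoint_biUnion_right _ _ _).2 fun t ht =>
        hIdisj (by simp at ht; omega)))
      hφ hφ0
    have hprefix : ∀ m j, j ≤ n → (Ico m j).biUnion (update a n α) = (Ico m j).biUnion a :=
      fun m j hj => biUnion_congr rfl fun t ht => update_of_ne (by simp at ht; omega) _ _
    refine ⟨update a n α, fun j hj => ?_⟩
    rcases Nat.lt_succ_iff_lt_or_eq.1 hj with hj | rfl
    · simpa only [update_of_ne hj.ne, hprefix _ _ hj.le] using ha j hj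
    · simp only [update_self, hprefix _ _ le_rfl]
      exact ⟨hαI, hα, fun i m hm => hαδ i ⟨m, by omega⟩⟩

lemma IsNearIntBound.succ {G : Type*} [Fintype G] {d r B : ℕ} {ε : ℝ} (hB : 0 < B)
    (hBε : 1 / (B : ℝ) ≤ ε / 2)
    (hr : IsNearIntBound ι (G × Fin (B ^ Fintype.card G + 1)) d r
      (ε / (2 * (B ^ Fintype.card G + 1)))) :
    IsNearIntBound ι G (d + 1) (B ^ Fintype.card G * r) ε := by
  intro A hA φ hφ hφ0
  obtain ⟨I, hIA, hI, hIdisj⟩ := exists_pairwise_disjoint_subsets r _ A hA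
  obtain ⟨a, ha⟩ := hr.exists_nearly_additive_chain hIA hI hIdisj hφ hφ0 le_rfl
  obtain ⟨u, v, huv, hvN, hclose⟩ :=
    exists_lt_distToInt_sub_lt hB fun m i => ∑ j ∈ range m, φ i (a j)
  refine ⟨(Ico u v).biUnion a, biUnion_nonempty.2 ⟨u, by simp [huv], (ha u (by omega)).2.1⟩,
    biUnion_subset.2 fun t ht => (ha t (by simp at ht; omega)).1.trans (hIA t), fun i => ?_⟩
  set S := ∑ j ∈ range v, φ i (a j) - ∑ j ∈ range u, φ i (a j)
  have hadd := distToInt_biUnion_sub_sum_le (φ i) (hφ0 i) a huv.le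
    fun j hj => ((ha j (by simp at hj; omega)).2.2 i u (by simp at hj; omega)).le
  rw [sum_Ico_eq_sub _ huv.le] at hadd
  have hchain : ((v : ℝ) - u) * (ε / (2 * (B ^ Fintype.card G + 1))) < ε / 2 := by
    have hε : 0 < ε := by linarith [show (0 : ℝ) < 1 / B by positivity]
    have hvu : (v : ℝ) - u ≤ B ^ Fintype.card G := by
      have : (v : ℝ) ≤ B ^ Fintype.card G := by exact_mod_cast hvN
      linarith [u.cast_nonneg (α := ℝ)]
    calc _ ≤ (B : ℝ) ^ Fintype.card G * (ε / (2 * (B ^ Fintype.card G + 1))) := by gcongr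
      _ < ε / 2 := by
        rw [mul_div_assoc', div_lt_div_iff₀ (by positivity) (by positivity)]
        nlinarith [hε]
  calc distToInt (φ i ((Ico u v).biUnion a))
      = distToInt (φ i ((Ico u v).biUnion a) - S + S) := by rw [sub_add_cancel]
    _ ≤ distToInt (φ i ((Ico u v).biUnion a) - S) + distToInt S := distToInt_add_le _ _
    _ < ε / 2 + ε / 2 := add_lt_add_of_le_of_lt (hadd.trans hchain.le) ((hclose i).trans_le hBε)
    _ = ε := add_halves ε

theorem exists_isNearIntBound (G : Type*) [Fintype G] (d : ℕ) {ε : ℝ}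
    (hε : 0 < ε) : ∃ r, IsNearIntBound ι G d r ε := by
  induction d generalizing G ε with
  | zero => exact ⟨1, isNearIntBound_zero G hε⟩
  | succ d ih =>
    set B := ⌈2 / ε⌉₊
    have hB : 0 < B := Nat.ceil_pos.2 (by positivity)
    have hBε : 1 / (B : ℝ) ≤ ε / 2 := by
      rw [one_div_le (by positivity) (by positivity), one_div_div]
      exact Nat.le_ceil _
    obtain ⟨r, hr⟩ := ih (G × Fin (B ^ Fintype.card G + 1))
      (ε := ε / (2 * (B ^ Fintype.card G + 1))) (by positivity)
    exact ⟨_, hr.succ hB hBε⟩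

/-- Proposition: for any k, d ∈ ℕ and ε > 0 there is r such that any k polynomial
mappings in `Pol⁰_d([r], ℝ)` simultaneously take a value within ε of ℤ at some
nonempty α ⊆ [r]. -/
theorem pol0_simultaneous_near_int (k d : ℕ) (ε : ℝ) (hε : 0 < ε) :
    ∃ r : ℕ, ∀ φ : Fin k → (Finset ℕ → ℝ),
      (∀ i, Pol0 (Finset.Icc 1 r) d (φ i)) →
      ∃ α : Finset ℕ, α.Nonempty ∧ α ⊆ Finset.Icc 1 r ∧
        ∀ i, distToInt (φ i α) < ε := by
  obtain ⟨r, hr⟩ := exists_isNearIntBound (ι := ℕ) (Fin k) d hε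
  exact ⟨r, fun φ hφ => hr _ (by simp) φ (fun i => (hφ i).1) (fun i => (hφ i).2)⟩
end

section
/- For any d, s ∈ ℕ and ε > 0 there exists r ∈ ℕ such that for any polynomial mapping φ ∈ Pol⁰_d([r], 𝕋) there exists a disjoint s-subcollection B in [r] such that the subpolynomial φ↓_B admits a q-producing function Φ̂_B : B^d → 𝕋 satisfying dist(Φ̂_B(w), 0) < ε for every w ∈ B^d. -/
open Finset

/-!
Write `∂_S φ = pointDeriv φ ∅ S` for the derivative of `φ` at `∅` along the points of `S`.
Möbius inversion gives `φ γ = ∑_{S ⊆ γ} ∂_S φ`, and `∂_S φ = 0` once `|S| > d`. Hence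
`φ↓_B = subpoly φ B` has the q-producing function that puts `∂_J (φ↓_B)`, a block derivative of
`φ`, on a single tuple `v` with image `J` and `0` on all others; so it suffices to find `s` blocks
on which all block derivatives of `φ` are small.

These blocks are found by induction on `d`, for maps into any compact abelian group. Color the
increasing `d`-tuples `u` by a cell of small diameter containing the box sum
`G u = ∑_{x ≤ u} ∂_{im x} φ`. By Ramsey's theorem there are `2m` points all of whose increasing
`d`-tuples get the same color. On the `m` intervals they bound, an order-`d` block derivative is
the alternating sum of `G` over the `2^d` corners of a box, hence small. Subtracting from `φ↓_C`
its homogeneous part of degree `d` leaves a map of degree `< d`, to which the induction hypothesis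
applies; the homogeneous part changes each block derivative by at most `2^m` small terms.
-/

open Function
open Fintype (piFinset mem_piFinset)

universe v

theorem sum_piFinset_eq_sum_indicator {n α H : Type*} [Fintype n] [DecidableEq n]
    [DecidableEq α] [AddCommGroup H] {R Q : n → Finset α} (hRQ : ∀ i, R i ⊆ Q i)
    (f : (n → α) → H) :
    ∑ x ∈ piFinset R, f x = ∑ x ∈ piFinset Q, (∏ i, if x i ∈ R i then (1 : ℤ) else 0) • f x := by
  simp only [Fintype.prod_boole, ite_smul, one_smul, zero_smul]
  rw [← sum_filter]
  congr 1
  ext x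
  simp only [mem_filter, mem_piFinset]
  exact ⟨fun h => ⟨fun i => hRQ i (h i), h⟩, fun h => h.2⟩

theorem sum_piFinset_sdiff {n α H : Type*} [Fintype n] [DecidableEq n] [DecidableEq α]
    [AddCommGroup H] {P Q : n → Finset α} (hPQ : ∀ i, P i ⊆ Q i) (f : (n → α) → H) :
    ∑ x ∈ piFinset fun i => Q i \ P i, f x =
      ∑ S : Finset n, (-1 : ℤ) ^ S.card •
        ∑ x ∈ piFinset fun i => if i ∈ S then P i else Q i, f x := by
  have hcorner : ∀ (S : Finset n) i, (if i ∈ S then P i else Q i) ⊆ Q i := fun S i => by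
    split_ifs
    exacts [hPQ i, subset_rfl]
  simp only [sum_piFinset_eq_sum_indicator (hcorner _) f,
    sum_piFinset_eq_sum_indicator (fun i => sdiff_subset) f, smul_sum, smul_smul]
  rw [sum_comm]
  refine sum_congr rfl fun x _ => ?_
  rw [← sum_smul]
  congr 1
  have hind : ∀ i, (if x i ∈ Q i \ P i then (1 : ℤ) else 0) =
      -(if x i ∈ P i then 1 else 0) + if x i ∈ Q i then 1 else 0 := fun i => by
    by_cases hP : x i ∈ P i
    · simp [hP, hPQ i hP]
    · simp [hP]
  simp only [hind, Fintype.prod_add, prod_neg]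
  refine sum_congr rfl fun S _ => ?_
  rw [mul_assoc, ← prod_mul_prod_compl S]
  congr 2 <;> refine prod_congr rfl fun i hi => ?_
  · rw [if_pos hi]
  · rw [if_neg (mem_compl.1 hi)]

theorem norm_sum_neg_one_pow_smul_lt {n E : Type*} [Fintype n] [Nonempty n]
    [SeminormedAddCommGroup E] (z : Finset n → E) {η : ℝ} (hz : ∀ S, ‖z S - z ∅‖ < η) :
    ‖∑ S : Finset n, (-1 : ℤ) ^ S.card • z S‖ < 2 ^ Fintype.card n * η := by
  classical
  have hzero : ∑ S : Finset n, (-1 : ℤ) ^ S.card • z ∅ = 0 := by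
    rw [← sum_smul, ← powerset_univ, sum_powerset_neg_one_pow_card_of_nonempty univ_nonempty,
      zero_smul]
  calc ‖∑ S : Finset n, (-1 : ℤ) ^ S.card • z S‖
      = ‖∑ S : Finset n, (-1 : ℤ) ^ S.card • (z S - z ∅)‖ := by
        simp only [smul_sub, sum_sub_distrib, hzero, sub_zero]
    _ ≤ ∑ S : Finset n, ‖(-1 : ℤ) ^ S.card • (z S - z ∅)‖ := norm_sum_le _ _
    _ = ∑ S : Finset n, ‖z S - z ∅‖ := sum_congr rfl fun S _ => by
        rcases neg_one_pow_eq_or ℤ S.card with h | h <;> simp [h, norm_sub_rev]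
    _ < ∑ _S : Finset n, η := sum_lt_sum_of_nonempty univ_nonempty fun S _ => hz S
    _ = 2 ^ Fintype.card n * η := by simp [Fintype.card_finset]

theorem exists_sum_eq_sum_image {α β H : Type*} [DecidableEq β] [AddCommMonoid H] (g : α → β)
    (F : β → H) : ∃ Φ : α → H, (∀ a, Φ a = 0 ∨ Φ a = F (g a)) ∧
      ∀ t : Finset α, (∀ a a', a ∈ t → g a' = g a → a' ∈ t) →
        ∑ a ∈ t, Φ a = ∑ b ∈ t.image g, F b := by
  classical
  rcases isEmpty_or_nonempty α with hα | hα
  · exact ⟨isEmptyElim, isEmptyElim, fun t _ => by simp [eq_empty_of_isEmpty t]⟩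
  refine ⟨fun a => if invFun g (g a) = a then F (g a) else 0, fun a => by
    dsimp only; split_ifs <;> simp, fun t ht => ?_⟩
  have hinj : Set.InjOn g (t.filter fun a => invFun g (g a) = a) := fun a ha a' ha' h => by
    rw [← (mem_filter.1 ha).2, ← (mem_filter.1 ha').2, h]
  rw [← sum_filter, ← sum_image hinj]
  congr 1
  ext b
  simp only [mem_image, mem_filter]
  constructor
  · rintro ⟨a, ⟨ha, -⟩, rfl⟩
    exact ⟨a, ha, rfl⟩
  · rintro ⟨a, ha, rfl⟩
    have hrep : g (invFun g (g a)) = g a := invFun_eq ⟨a, rfl⟩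
    exact ⟨invFun g (g a), ⟨ht a _ ha hrep, by rw [hrep]⟩, hrep⟩

theorem exists_image_univ_eq {κ : Type*} [DecidableEq κ] {d : ℕ} {J : Finset κ}
    (hJ : J.Nonempty) (hd : J.card ≤ d) : ∃ v : Fin d → κ, univ.image v = J := by
  obtain ⟨x₀, hx₀⟩ := hJ
  refine ⟨fun i => if h : (i : ℕ) < J.card then J.equivFin.symm ⟨i, h⟩ else x₀,
    subset_antisymm (image_subset_iff.2 fun i _ => ?_) fun y hy => mem_image.2 ?_⟩
  · split_ifs
    exacts [coe_mem _, hx₀]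
  · refine ⟨Fin.castLE hd (J.equivFin ⟨y, hy⟩), mem_univ _, ?_⟩
    simp

def IsRamseyBound (n : ℕ) (κ : Type*) (k N : ℕ) : Prop :=
  ∀ {ι : Type v} [LinearOrder ι] (χ : (Fin n → ι) → κ) (V : Finset ι), N ≤ V.card →
    ∃ W ⊆ V, W.card = k ∧ ∃ c, ∀ u : Fin n → ι, StrictMono u → (∀ i, u i ∈ W) → χ u = c

theorem exists_subset_color_eq_apply_zero {n : ℕ} {κ : Type*} [Nonempty κ]
    (hR : ∀ k, ∃ N, IsRamseyBound.{v} n κ k N) (m : ℕ) :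
    ∃ N : ℕ, ∀ {ι : Type v} [LinearOrder ι] (χ : (Fin (n + 1) → ι) → κ) (V : Finset ι),
      N ≤ V.card → ∃ W ⊆ V, W.card = m ∧
        ∃ f : ι → κ, ∀ u, StrictMono u → (∀ i, u i ∈ W) → χ u = f (u 0) := by
  induction m with
  | zero =>
    exact ⟨0, fun χ V _ => ⟨∅, empty_subset V, rfl, fun _ => Classical.arbitrary κ,
      fun u _ hu => absurd (hu 0) (notMem_empty _)⟩⟩
  | succ m ih =>
    obtain ⟨M, hM⟩ := ih
    obtain ⟨N, hN⟩ := hR M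
    refine ⟨N + 1, fun χ V hV => ?_⟩
    have hVne : V.Nonempty := card_pos.1 (by omega)
    set x := V.min' hVne
    have hxV : x ∈ V := min'_mem V hVne
    obtain ⟨W₁, hW₁, hW₁card, c, hc⟩ := hN (fun t => χ (Fin.cons x t)) (V.erase x)
      (by rw [card_erase_of_mem hxV]; omega)
    obtain ⟨W', hW', hW'card, f, hf⟩ := hM χ W₁ hW₁card.ge
    have hW'V : W' ⊆ V.erase x := hW'.trans hW₁
    have hxW' : x ∉ W' := fun h => notMem_erase x V (hW'V h)
    refine ⟨insert x W', insert_subset hxV (hW'V.trans (erase_subset x V)),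
      by rw [card_insert_of_notMem hxW', hW'card], update f x c, fun u hu huW => ?_⟩
    have hmemW' : ∀ i, x < u i → u i ∈ W' := fun i hi =>
      (mem_insert.1 (huW i)).resolve_left hi.ne'
    have hxu0 : x ≤ u 0 :=
      min'_le V _ (insert_subset hxV (hW'V.trans (erase_subset x V)) (huW 0))
    by_cases h0 : u 0 = x
    · rw [h0, update_self, ← Fin.cons_self_tail u, h0]
      exact hc _ (hu.comp Fin.strictMono_succ) fun i =>
        hW' (hmemW' _ (h0 ▸ hu (Fin.succ_pos i)))
    · rw [update_of_ne h0]
      exact hf u hu fun i => hmemW' i ((lt_of_le_of_ne hxu0 (Ne.symm h0)).trans_le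
        (hu.monotone (Fin.zero_le i)))

theorem exists_isRamseyBound (n : ℕ) (κ : Type*) [Finite κ] [Nonempty κ] (k : ℕ) :
    ∃ N, IsRamseyBound.{v} n κ k N := by
  induction n generalizing k with
  | zero =>
    refine ⟨k, fun χ V hV => ?_⟩
    obtain ⟨W, hWV, hW⟩ := exists_subset_card_eq hV
    exact ⟨W, hWV, hW, χ Fin.elim0, fun u _ _ => congrArg χ (Subsingleton.elim _ _)⟩
  | succ n ih =>
    classical
    cases nonempty_fintype κ
    obtain ⟨N, hN⟩ := exists_subset_color_eq_apply_zero ih (Fintype.card κ * (k - 1) + 1)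
    refine ⟨N, fun χ V hV => ?_⟩
    obtain ⟨W, hWV, hWcard, f, hf⟩ := hN χ V hV
    obtain ⟨c, -, hc⟩ := exists_lt_card_fiber_of_mul_lt_card_of_maps_to (s := W) (n := k - 1)
      (fun x _ => mem_univ (f x)) (by rw [card_univ, hWcard]; omega)
    obtain ⟨W', hW', hW'card⟩ := exists_subset_card_eq (show k ≤ (W.filter (f · = c)).card by
      omega)
    refine ⟨W', hW'.trans ((filter_subset _ W).trans hWV), hW'card, c, fun u hu huW => ?_⟩
    rw [hf u hu fun i => filter_subset _ W (hW' (huW i))]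
    exact (mem_filter.1 (hW' (huW 0))).2

theorem exists_finset_coloring_dist_lt (X : Type*) [PseudoMetricSpace X] [CompactSpace X]
    {δ : ℝ} (hδ : 0 < δ) : ∃ (t : Finset X) (c : X → t), ∀ x y, c x = c y → dist x y < δ := by
  obtain ⟨t, -, ht⟩ := isCompact_univ.elim_nhds_subcover (fun x : X => Metric.ball x (δ / 2))
    fun x _ => Metric.ball_mem_nhds x (half_pos hδ)
  have hcover : ∀ x : X, ∃ y : t, dist x y < δ / 2 := fun x => by
    obtain ⟨y, hy, hxy⟩ := Set.mem_iUnion₂.1 (ht (Set.mem_univ x))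
    exact ⟨⟨y, hy⟩, hxy⟩
  choose c hc using hcover
  refine ⟨t, c, fun x y hxy => ?_⟩
  calc dist x y ≤ dist x (c x) + dist (c y : X) y := by
        rw [hxy]; exact dist_triangle _ _ _
    _ < δ := by linarith [hc x, dist_comm (c y : X) y ▸ hc y]

theorem exists_interleaved_of_card_eq {ι : Type*} [LinearOrder ι] {W : Finset ι} {m : ℕ}
    (hW : W.card = 2 * m) : ∃ lo hi : Fin m → ι, (∀ j, lo j ∈ W ∧ hi j ∈ W) ∧
      (∀ j, lo j < hi j) ∧ ∀ j j', j < j' → hi j < lo j' := by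
  set w := W.orderEmbOfFin hW
  refine ⟨fun j => w ⟨2 * j, by omega⟩, fun j => w ⟨2 * j + 1, by omega⟩,
    fun j => ⟨W.orderEmbOfFin_mem hW _, W.orderEmbOfFin_mem hW _⟩,
    fun j => w.strictMono (Fin.mk_lt_mk.2 (by omega)), fun j j' h => w.strictMono ?_⟩
  rw [Fin.mk_lt_mk]
  have : (j : ℕ) < j' := h
  omega

section PointDeriv

variable {ι κ H : Type*} [DecidableEq ι] [DecidableEq κ] [AddCommGroup H]

def pointDeriv (φ : Finset ι → H) (α T : Finset ι) : H :=
  ∑ U ∈ T.powerset, (-1 : ℤ) ^ (T.card + U.card) • φ (α ∪ U)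

def subpoly (φ : Finset ι → H) (B : κ → Finset ι) : Finset κ → H :=
  fun γ => φ (γ.biUnion B)

def PointDegLE (A : Finset ι) (d : ℕ) (φ : Finset ι → H) : Prop :=
  ∀ ⦃α T : Finset ι⦄, α ⊆ A → T ⊆ A → Disjoint α T → T.card = d + 1 → pointDeriv φ α T = 0

def hittingSets (B : κ → Finset ι) (J : Finset κ) : Finset (Finset ι) :=
  (J.biUnion B).powerset.filter fun S => ∀ j ∈ J, (S ∩ B j).Nonempty

@[simp]
theorem pointDeriv_empty (φ : Finset ι → H) (α : Finset ι) : pointDeriv φ α ∅ = φ α := by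
  simp [pointDeriv]

theorem pointDeriv_insert (φ : Finset ι → H) (α : Finset ι) {T : Finset ι} {x : ι} (hx : x ∉ T) :
    pointDeriv φ α (insert x T) = pointDeriv φ (insert x α) T - pointDeriv φ α T := by
  simp only [pointDeriv, sum_powerset_insert hx, card_insert_of_notMem hx]
  rw [add_comm, sub_eq_add_neg, ← sum_neg_distrib]
  congr 1
  · refine sum_congr rfl fun U hU => ?_
    rw [card_insert_of_notMem fun h => hx (mem_powerset.1 hU h), union_insert, insert_union]
    congr 1
    ring
  · refine sum_congr rfl fun U _ => ?_
    rw [add_right_comm, pow_succ, mul_neg_one, neg_smul]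

theorem pointDeriv_sub (φ ψ : Finset ι → H) (α T : Finset ι) :
    pointDeriv (φ - ψ) α T = pointDeriv φ α T - pointDeriv ψ α T := by
  simp only [pointDeriv, Pi.sub_apply, smul_sub, sum_sub_distrib]

theorem pointDeriv_add (φ ψ : Finset ι → H) (α T : Finset ι) :
    pointDeriv (φ + ψ) α T = pointDeriv φ α T + pointDeriv ψ α T := by
  simp only [pointDeriv, Pi.add_apply, smul_add, sum_add_distrib]

theorem sum_powerset_pointDeriv (φ : Finset ι → H) (α C : Finset ι) :
    ∑ S ∈ C.powerset, pointDeriv φ α S = φ (α ∪ C) := by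
  induction C using Finset.induction_on generalizing α with
  | empty => simp
  | insert x C hx ih =>
    rw [sum_powerset_insert hx, ih]
    have h : ∀ S ∈ C.powerset,
        pointDeriv φ α (insert x S) = pointDeriv φ (insert x α) S - pointDeriv φ α S :=
      fun S hS => pointDeriv_insert φ α fun h => hx (mem_powerset.1 hS h)
    rw [sum_congr rfl h, sum_sub_distrib, ih, ih, insert_union, union_insert]
    abel

theorem pointDeriv_sum_powerset (g : Finset ι → H) {α T : Finset ι} (hαT : Disjoint α T) :
    pointDeriv (fun γ => ∑ S ∈ γ.powerset, g S) α T = ∑ V ∈ α.powerset, g (V ∪ T) := by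
  induction T using Finset.induction_on generalizing α with
  | empty => simp
  | insert x T hx ih =>
    have hxα : x ∉ α := fun h => disjoint_left.1 hαT h (mem_insert_self x T)
    rw [pointDeriv_insert _ _ hx, ih (disjoint_insert_left.2 ⟨hx, hαT.mono_right
      (subset_insert x T)⟩), ih (hαT.mono_right (subset_insert x T)),
      sum_powerset_insert hxα, add_sub_cancel_left]
    exact sum_congr rfl fun V _ => by rw [insert_union, union_insert]

theorem pointDeriv_empty_sum_powerset (g : Finset ι → H) (T : Finset ι) :
    pointDeriv (fun γ => ∑ S ∈ γ.powerset, g S) ∅ T = g T := by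
  simp [pointDeriv_sum_powerset g (disjoint_empty_left T)]

end PointDeriv

section Degree

variable {ι κ H : Type*} [DecidableEq ι] [DecidableEq κ] [AddCommGroup H]
  {A : Finset ι} {d : ℕ} {φ : Finset ι → H}

theorem PointDegLE.pointDeriv_eq_zero (hφ : PointDegLE A d φ) {α T : Finset ι} (hα : α ⊆ A)
    (hT : T ⊆ A) (hαT : Disjoint α T) (hcard : d < T.card) : pointDeriv φ α T = 0 := by
  induction T using Finset.induction_on generalizing α with
  | empty => simp at hcard
  | insert x T hx ih =>
    rw [card_insert_of_notMem hx] at hcard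
    obtain hTd | hTd := (Nat.lt_succ_iff.1 hcard).eq_or_lt
    · exact hφ hα hT hαT (by rw [card_insert_of_notMem hx, hTd])
    · have hT' : T ⊆ A := (subset_insert x T).trans hT
      have hαT' : Disjoint α T := hαT.mono_right (subset_insert x T)
      rw [pointDeriv_insert φ α hx, ih (insert_subset (hT (mem_insert_self x T)) hα) hT'
        (disjoint_insert_left.2 ⟨hx, hαT'⟩) hTd, ih hα hT' hαT' hTd, sub_zero]

theorem PointDegLE.pointDeriv_eq_pointDeriv_empty (hφ : PointDegLE A d φ) {α T : Finset ι}
    (hα : α ⊆ A) (hT : T ⊆ A) (hαT : Disjoint α T) (hcard : T.card = d) :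
    pointDeriv φ α T = pointDeriv φ ∅ T := by
  have hexp : φ = fun γ => ∑ S ∈ γ.powerset, pointDeriv φ ∅ S :=
    funext fun γ => by rw [sum_powerset_pointDeriv, empty_union]
  calc pointDeriv φ α T
      = pointDeriv (fun γ => ∑ S ∈ γ.powerset, pointDeriv φ ∅ S) α T := by rw [← hexp]
    _ = ∑ V ∈ α.powerset, pointDeriv φ ∅ (V ∪ T) := pointDeriv_sum_powerset _ hαT
    _ = pointDeriv φ ∅ T := by
      refine (sum_eq_single_of_mem ∅ (empty_mem_powerset α) fun V hV hV0 => ?_).trans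
        (by rw [empty_union])
      have hVα := mem_powerset.1 hV
      refine hφ.pointDeriv_eq_zero (empty_subset A) (union_subset (hVα.trans hα) hT)
        (disjoint_empty_left _) ?_
      rw [card_union_of_disjoint (hαT.mono_left hVα), hcard]
      have := card_pos.2 (nonempty_iff_ne_empty.2 hV0)
      omega

def homogeneousPart (φ : Finset ι → H) (n : ℕ) : Finset ι → H :=
  fun γ => ∑ S ∈ γ.powerset, if S.card = n then pointDeriv φ ∅ S else 0

theorem pointDeriv_empty_homogeneousPart (φ : Finset ι → H) (n : ℕ) (T : Finset ι) :
    pointDeriv (homogeneousPart φ n) ∅ T = if T.card = n then pointDeriv φ ∅ T else 0 :=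
  pointDeriv_empty_sum_powerset _ T

theorem PointDegLE.sub_homogeneousPart (hφ : PointDegLE A (d + 1) φ) :
    PointDegLE A d (φ - homogeneousPart φ (d + 1)) := by
  intro α T hα hT hαT hcard
  have hhom : pointDeriv (homogeneousPart φ (d + 1)) α T = pointDeriv φ ∅ T := by
    unfold homogeneousPart
    rw [pointDeriv_sum_powerset _ hαT,
      sum_eq_single_of_mem ∅ (empty_mem_powerset α), empty_union, if_pos hcard]
    intro V hV hV0
    refine if_neg ?_
    rw [card_union_of_disjoint (hαT.mono_left (mem_powerset.1 hV)), hcard]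
    have := card_pos.2 (nonempty_iff_ne_empty.2 hV0)
    omega
  rw [pointDeriv_sub, hhom, hφ.pointDeriv_eq_pointDeriv_empty hα hT hαT hcard, sub_self]

theorem sum_powerset_biUnion {B : κ → Finset ι} (hB : Pairwise (Disjoint on B))
    (g : Finset ι → H) (U : Finset κ) :
    ∑ S ∈ (U.biUnion B).powerset, g S = ∑ T ∈ U.powerset, ∑ S ∈ hittingSets B T, g S := by
  rw [← sum_fiberwise_of_maps_to (g := fun S => U.filter fun j => (S ∩ B j).Nonempty)
    fun S _ => mem_powerset.2 (filter_subset _ U)]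
  refine sum_congr rfl fun T hT => sum_congr (ext fun S => ?_) fun _ _ => rfl
  have hTU := mem_powerset.1 hT
  have hblock : ∀ {x j j'}, x ∈ B j → x ∈ B j' → j = j' := fun hx hx' => by
    by_contra hne
    exact disjoint_left.1 (hB hne) hx hx'
  simp only [hittingSets, mem_filter, mem_powerset, subset_iff, mem_biUnion]
  constructor
  · rintro ⟨hSU, rfl⟩
    refine ⟨fun x hx => ?_, fun j hj => (mem_filter.1 hj).2⟩
    obtain ⟨j, hj, hxj⟩ := hSU hx
    exact ⟨j, mem_filter.2 ⟨hj, x, mem_inter.2 ⟨hx, hxj⟩⟩, hxj⟩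
  · rintro ⟨hST, hhit⟩
    refine ⟨fun x hx => ?_, ext fun j => ⟨fun hj => ?_, fun hj => ?_⟩⟩
    · obtain ⟨j, hj, hxj⟩ := hST hx
      exact ⟨j, hTU hj, hxj⟩
    · obtain ⟨hjU, y, hy⟩ := mem_filter.1 hj
      obtain ⟨j', hj', hyj'⟩ := hST (mem_inter.1 hy).1
      rwa [hblock (mem_inter.1 hy).2 hyj']
    · exact mem_filter.2 ⟨hTU hj, hhit j hj⟩

theorem pointDeriv_subpoly {B : κ → Finset ι} (hB : Pairwise (Disjoint on B))
    (φ : Finset ι → H) (α J : Finset κ) :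
    pointDeriv (subpoly φ B) α J =
      ∑ S ∈ hittingSets B J, pointDeriv φ (α.biUnion B) S := by
  have hexp : (fun U => subpoly φ B (α ∪ U)) = fun U =>
      ∑ T ∈ U.powerset, ∑ S ∈ hittingSets B T, pointDeriv φ (α.biUnion B) S := by
    funext U
    rw [subpoly, union_biUnion, ← sum_powerset_pointDeriv φ, sum_powerset_biUnion hB]
  rw [show pointDeriv (subpoly φ B) α J = pointDeriv (fun U => subpoly φ B (α ∪ U)) ∅ J by
    simp [pointDeriv], hexp, pointDeriv_empty_sum_powerset]

theorem card_le_card_of_mem_hittingSets {B : κ → Finset ι} (hB : Pairwise (Disjoint on B))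
    {J : Finset κ} {S : Finset ι} (hS : S ∈ hittingSets B J) : J.card ≤ S.card := by
  refine card_le_card_of_forall_subsingleton (fun j x => x ∈ B j) (fun j hj => ?_) ?_
  · obtain ⟨x, hx⟩ := (mem_filter.1 hS).2 j hj
    exact ⟨x, (mem_inter.1 hx).1, (mem_inter.1 hx).2⟩
  · intro x _ j hj j' hj'
    by_contra hne
    exact disjoint_left.1 (hB hne) hj.2 hj'.2

theorem pointDegLE_subpoly (hφ : PointDegLE A d φ) {B : κ → Finset ι}
    (hB : Pairwise (Disjoint on B)) (hBA : ∀ j, B j ⊆ A) (K : Finset κ) :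
    PointDegLE K d (subpoly φ B) := by
  intro α T _ _ hαT hcard
  rw [pointDeriv_subpoly hB]
  refine sum_eq_zero fun S hS => ?_
  have hST : S ⊆ T.biUnion B := mem_powerset.1 (mem_filter.1 hS).1
  refine hφ.pointDeriv_eq_zero (biUnion_subset.2 fun j _ => hBA j)
    (hST.trans (biUnion_subset.2 fun j _ => hBA j)) (Disjoint.mono_right hST ?_) ?_
  · refine (disjoint_biUnion_left _ _ _).2 fun j hj =>
      (disjoint_biUnion_right _ _ _).2 fun j' hj' => hB ?_
    rintro rfl
    exact disjoint_left.1 hαT hj hj'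
  · have := card_le_card_of_mem_hittingSets hB hS
    omega

theorem subpoly_subpoly {ι κ μ H : Type*} [DecidableEq ι] [DecidableEq κ] (φ : Finset ι → H)
    (C : κ → Finset ι) (D : μ → Finset κ) :
    subpoly (subpoly φ C) D = subpoly φ fun j => (D j).biUnion C := by
  funext γ
  simp [subpoly, biUnion_biUnion]

theorem pairwise_disjoint_biUnion {ι κ μ : Type*} [DecidableEq ι] {C : κ → Finset ι}
    {D : μ → Finset κ} (hC : Pairwise (Disjoint on C)) (hD : Pairwise (Disjoint on D)) :
    Pairwise (Disjoint on fun j => (D j).biUnion C) := fun _ _ hne =>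
  (disjoint_biUnion_left _ _ _).2 fun _ hi => (disjoint_biUnion_right _ _ _).2
    fun _ hi' => hC fun h => disjoint_left.1 (hD hne) hi (h ▸ hi')

end Degree

section IterDeriv

variable {ι H : Type*} [DecidableEq ι] [AddCommGroup H]

theorem pointDeriv_fsDeriv_singleton (φ : Finset ι → H) (α T : Finset ι) (x : ι) :
    pointDeriv (fsDeriv φ {x}) α T = pointDeriv φ (insert x α) T - pointDeriv φ α T := by
  simp only [pointDeriv, fsDeriv, smul_sub, sum_sub_distrib, union_right_comm α _ {x},
    union_singleton]

theorem iterDeriv_singleton {n : ℕ} (φ : Finset ι → H) {g : Fin n → ι} (hg : Injective g)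
    (α : Finset ι) : iterDeriv φ (fun i => {g i}) α = pointDeriv φ α (univ.image g) := by
  induction n generalizing φ with
  | zero => simp [iterDeriv]
  | succ n ih =>
    have hg0 : g 0 ∉ univ.image (g ∘ Fin.succ) := by
      simp [hg.eq_iff, Fin.succ_ne_zero]
    have himage : univ.image g = insert (g 0) (univ.image (g ∘ Fin.succ)) := by
      ext y
      simp [Fin.exists_fin_succ, eq_comm]
    rw [iterDeriv, himage, pointDeriv_insert φ α hg0, ← pointDeriv_fsDeriv_singleton]
    exact ih _ (hg.comp (Fin.succ_injective n))

end IterDeriv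

theorem IsPolyDeg.pointDegLE {ι H : Type*} [DecidableEq ι] [AddCommGroup H] {A : Finset ι}
    {d : ℕ} {φ : Finset ι → H} (hφ : IsPolyDeg A d φ) : PointDegLE A d φ := by
  intro α T hα hT hαT hcard
  set g : Fin (d + 1) → ι := fun i => T.equivFin.symm (Fin.cast hcard.symm i)
  have hg : Injective g := fun i j hij =>
    by simpa [g, Subtype.val_inj, (Fin.cast_injective _).eq_iff] using hij
  have hgT : ∀ i, g i ∈ T := fun i => (T.equivFin.symm _).2
  have himage : univ.image g = T :=
    eq_of_subset_of_card_le (image_subset_iff.2 fun i _ => hgT i)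
      (by rw [card_image_of_injective _ hg, card_univ, Fintype.card_fin, hcard])
  rw [← himage, ← iterDeriv_singleton φ hg]
  exact hφ _ (fun i => singleton_subset_iff.2 (hT (hgT i)))
    (fun i j hij => disjoint_singleton.2 (hg.ne hij)) α hα
    (fun i => disjoint_singleton_right.2 fun h => disjoint_left.1 hαT h (hgT i))

section TopOrder

variable {ι κ H : Type*} [DecidableEq ι] [DecidableEq κ] [AddCommGroup H]
  {A : Finset ι} {n : ℕ} {φ : Finset ι → H}

theorem PointDegLE.pointDeriv_subpoly_map (hφ : PointDegLE A n φ) {B : κ → Finset ι}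
    (hB : Pairwise (Disjoint on B)) (hBA : ∀ j, B j ⊆ A) (e : Fin n ↪ κ) :
    pointDeriv (subpoly φ B) ∅ (univ.map e) =
      ∑ x ∈ piFinset fun i => B (e i), pointDeriv φ ∅ (univ.image x) := by
  have hblock : ∀ {x i j}, x ∈ B (e i) → x ∈ B (e j) → i = j := fun hi hj => by
    by_contra hne
    exact disjoint_left.1 (hB (e.injective.ne hne)) hi hj
  have hinj : ∀ {x : Fin n → ι}, x ∈ piFinset (fun i => B (e i)) → Injective x :=
    fun hx i j hij => hblock (mem_piFinset.1 hx i) (hij ▸ mem_piFinset.1 hx j)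
  have hmem : ∀ x ∈ piFinset fun i => B (e i), univ.image x ∈ hittingSets B (univ.map e) := by
    intro x hx
    refine mem_filter.2 ⟨mem_powerset.2 (image_subset_iff.2 fun i _ =>
      mem_biUnion.2 ⟨e i, mem_map_of_mem e (mem_univ i), mem_piFinset.1 hx i⟩), ?_⟩
    simp only [mem_map, mem_univ, true_and, forall_exists_index, forall_apply_eq_imp_iff]
    exact fun i => ⟨x i, mem_inter.2 ⟨mem_image_of_mem x (mem_univ i), mem_piFinset.1 hx i⟩⟩
  have himage_inj : Set.InjOn (fun x : Fin n → ι => univ.image x)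
      (piFinset fun i => B (e i)) := by
    intro x hx y hy (hxy : univ.image x = univ.image y)
    funext i
    obtain ⟨j, -, hj⟩ := mem_image.1 (hxy ▸ mem_image_of_mem x (mem_univ i) :
      x i ∈ univ.image y)
    rw [← hj, hblock (mem_piFinset.1 hy j) (hj ▸ mem_piFinset.1 hx i)]
  rw [pointDeriv_subpoly hB, biUnion_empty, ← sum_image himage_inj]
  refine (sum_subset (image_subset_iff.2 hmem) fun S hS hSnot => ?_).symm
  have hSA : S ⊆ A := (mem_powerset.1 (mem_filter.1 hS).1).trans
    (biUnion_subset.2 fun j _ => hBA j)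
  refine hφ.pointDeriv_eq_zero (empty_subset A) hSA (disjoint_empty_left S)
    (not_le.1 fun hSn => hSnot ?_)
  choose x hx using fun i => (mem_filter.1 hS).2 (e i) (mem_map_of_mem e (mem_univ i))
  have hxbox : x ∈ piFinset fun i => B (e i) := mem_piFinset.2 fun i => (mem_inter.1 (hx i)).2
  refine mem_image.2 ⟨x, hxbox, eq_of_subset_of_card_le
    (image_subset_iff.2 fun i _ => (mem_inter.1 (hx i)).1) ?_⟩
  rwa [card_image_of_injective _ (hinj hxbox), card_univ, Fintype.card_fin]

end TopOrder

section IntervalBlocks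

variable {ι κ H : Type*} [LinearOrder ι] [DecidableEq κ] [AddCommGroup H]

def intervalBlock (A : Finset ι) (a b : ι) : Finset ι :=
  A.filter fun x => a < x ∧ x ≤ b

def lowerBoxSum (A : Finset ι) (φ : Finset ι → H) {n : ℕ} (u : Fin n → ι) : H :=
  ∑ x ∈ piFinset fun i => A.filter (· ≤ u i), pointDeriv φ ∅ (univ.image x)

theorem intervalBlock_eq_sdiff (A : Finset ι) (a b : ι) :
    intervalBlock A a b = A.filter (· ≤ b) \ A.filter (· ≤ a) := by
  ext x
  simp only [intervalBlock, mem_filter, mem_sdiff, not_and, not_le]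
  tauto

theorem disjoint_intervalBlock (A : Finset ι) {a b a' b' : ι} (h : b < a') :
    Disjoint (intervalBlock A a b) (intervalBlock A a' b') :=
  disjoint_left.2 fun _ hx hx' =>
    ((mem_filter.1 hx).2.2.trans_lt h).not_gt (mem_filter.1 hx').2.1

theorem PointDegLE.pointDeriv_subpoly_intervalBlock {A : Finset ι} {n : ℕ} {φ : Finset ι → H}
    (hφ : PointDegLE A n φ) {lo hi : κ → ι} (hlohi : ∀ j, lo j ≤ hi j)
    (hdisj : Pairwise (Disjoint on fun j => intervalBlock A (lo j) (hi j))) (e : Fin n ↪ κ) :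
    pointDeriv (subpoly φ fun j => intervalBlock A (lo j) (hi j)) ∅ (univ.map e) =
      ∑ S : Finset (Fin n), (-1 : ℤ) ^ S.card •
        lowerBoxSum A φ fun i => if i ∈ S then lo (e i) else hi (e i) := by
  rw [hφ.pointDeriv_subpoly_map hdisj (fun j => filter_subset _ A) e]
  simp only [intervalBlock_eq_sdiff]
  rw [sum_piFinset_sdiff fun i x hx =>
    mem_filter.2 ⟨(mem_filter.1 hx).1, (mem_filter.1 hx).2.trans (hlohi (e i))⟩]
  refine sum_congr rfl fun S _ => ?_
  unfold lowerBoxSum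
  congr 3 with i
  dsimp only
  split_ifs <;> rfl

end IntervalBlocks

theorem exists_blocks_norm_pointDeriv_subpoly_top_lt {H : Type*} [SeminormedAddCommGroup H]
    [CompactSpace H] (d m : ℕ) {δ : ℝ} (hδ : 0 < δ) :
    ∃ r : ℕ, ∀ {ι : Type v} [LinearOrder ι] (A : Finset ι), r ≤ A.card →
      ∀ φ : Finset ι → H, PointDegLE A (d + 1) φ →
        ∃ C : Fin m → Finset ι, (∀ j, (C j).Nonempty ∧ C j ⊆ A) ∧ Pairwise (Disjoint on C) ∧
          ∀ J : Finset (Fin m), J.card = d + 1 → ‖pointDeriv (subpoly φ C) ∅ J‖ < δ := by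
  obtain ⟨t, c, hc⟩ := exists_finset_coloring_dist_lt H (div_pos hδ (pow_pos two_pos (d + 1)))
  have : Nonempty t := ⟨c 0⟩
  obtain ⟨N, hN⟩ := exists_isRamseyBound.{v} (d + 1) t (2 * m)
  refine ⟨N, fun {ι} _ A hA φ hφ => ?_⟩
  obtain ⟨W, hWA, hWcard, c₀, hmono⟩ := hN (fun u => c (lowerBoxSum A φ u)) A hA
  obtain ⟨lo, hi, hmem, hlohi, hhilo⟩ := exists_interleaved_of_card_eq hWcard
  have hdisj : Pairwise (Disjoint on fun j => intervalBlock A (lo j) (hi j)) := by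
    intro j j' hne
    rcases lt_or_gt_of_ne hne with h | h
    exacts [disjoint_intervalBlock A (hhilo _ _ h), (disjoint_intervalBlock A (hhilo _ _ h)).symm]
  refine ⟨fun j => intervalBlock A (lo j) (hi j), fun j => ⟨⟨hi j, mem_filter.2
    ⟨hWA (hmem j).2, hlohi j, le_rfl⟩⟩, filter_subset _ A⟩, hdisj, fun J hJ => ?_⟩
  set e := J.orderEmbOfFin hJ
  set corner : Finset (Fin (d + 1)) → Fin (d + 1) → ι :=
    fun S i => if i ∈ S then lo (e i) else hi (e i)
  have hcorner : ∀ S, StrictMono (corner S) := fun S i i' hii' => by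
    calc corner S i ≤ hi (e i) := by
          simp only [corner]; split_ifs
          exacts [(hlohi _).le, le_rfl]
      _ < lo (e i') := hhilo _ _ (e.strictMono hii')
      _ ≤ corner S i' := by
          simp only [corner]; split_ifs
          exacts [le_rfl, (hlohi _).le]
  have hcornerW : ∀ S i, corner S i ∈ W := fun S i => by
    simp only [corner]; split_ifs
    exacts [(hmem _).1, (hmem _).2]
  have hclose : ∀ S, ‖lowerBoxSum A φ (corner S) - lowerBoxSum A φ (corner ∅)‖ <
      δ / 2 ^ (d + 1) := fun S => by
    rw [← dist_eq_norm]
    exact hc _ _ (by rw [hmono _ (hcorner S) (hcornerW S), hmono _ (hcorner ∅) (hcornerW ∅)])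
  have := norm_sum_neg_one_pow_smul_lt _ hclose
  rw [Fintype.card_fin, mul_div_cancel₀ _ (pow_ne_zero _ two_ne_zero)] at this
  rwa [← map_orderEmbOfFin_univ J hJ,
    hφ.pointDeriv_subpoly_intervalBlock (fun j => (hlohi j).le) hdisj]

theorem norm_pointDeriv_subpoly_homogeneousPart_le {ι κ H : Type*} [Fintype ι] [DecidableEq ι]
    [DecidableEq κ] [SeminormedAddCommGroup H] {ψ : Finset ι → H} {n : ℕ} {δ : ℝ} (hδ : 0 ≤ δ)
    (hψ : ∀ S : Finset ι, S.card = n → ‖pointDeriv ψ ∅ S‖ ≤ δ) {D : κ → Finset ι}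
    (hD : Pairwise (Disjoint on D)) (J : Finset κ) :
    ‖pointDeriv (subpoly (homogeneousPart ψ n) D) ∅ J‖ ≤ 2 ^ Fintype.card ι * δ := by
  rw [pointDeriv_subpoly hD, biUnion_empty]
  calc ‖∑ S ∈ hittingSets D J, pointDeriv (homogeneousPart ψ n) ∅ S‖
      ≤ ∑ S ∈ hittingSets D J, ‖pointDeriv (homogeneousPart ψ n) ∅ S‖ := norm_sum_le _ _
    _ ≤ (hittingSets D J).card • δ := sum_le_card_nsmul _ _ _ fun S _ => by
        rw [pointDeriv_empty_homogeneousPart]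
        split_ifs with h
        exacts [hψ S h, norm_zero.trans_le hδ]
    _ ≤ 2 ^ Fintype.card ι * δ := by
        rw [nsmul_eq_mul]
        gcongr
        exact_mod_cast (card_le_univ _).trans_eq Fintype.card_finset

-- `ι : Type` because the induction hypothesis is applied with the index type `Fin m`.
theorem exists_blocks_norm_pointDeriv_subpoly_lt {H : Type*} [SeminormedAddCommGroup H]
    [CompactSpace H] (d : ℕ) :
    ∀ (s : ℕ) {ε : ℝ}, 0 < ε → ∃ r : ℕ, ∀ (ι : Type) [LinearOrder ι] (A : Finset ι),
      r ≤ A.card → ∀ φ : Finset ι → H, PointDegLE A d φ →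
        ∃ B : Fin s → Finset ι, (∀ j, (B j).Nonempty ∧ B j ⊆ A) ∧ Pairwise (Disjoint on B) ∧
          ∀ J : Finset (Fin s), J.Nonempty → ‖pointDeriv (subpoly φ B) ∅ J‖ < ε := by
  induction d with
  | zero =>
    intro s ε hε
    refine ⟨s, fun ι _ A hA φ hφ => ?_⟩
    obtain ⟨A', hA'A, hA'⟩ := exists_subset_card_eq hA
    set f := A'.orderEmbOfFin hA'
    have hfA : ∀ j, {f j} ⊆ A := fun j => singleton_subset_iff.2 (hA'A (A'.orderEmbOfFin_mem hA' j))
    have hdisj : Pairwise (Disjoint on fun j => ({f j} : Finset ι)) :=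
      fun j j' h => disjoint_singleton.2 (f.injective.ne h)
    refine ⟨fun j => {f j}, fun j => ⟨singleton_nonempty _, hfA j⟩, hdisj, fun J hJ => ?_⟩
    rw [(pointDegLE_subpoly hφ hdisj hfA univ).pointDeriv_eq_zero (empty_subset _)
      (subset_univ J) (disjoint_empty_left J) (card_pos.2 hJ), norm_zero]
    exact hε
  | succ d ih =>
    intro s ε hε
    obtain ⟨m, hm⟩ := ih s (half_pos hε)
    have hδ : 0 < ε / 2 / 2 ^ m := by positivity
    obtain ⟨r, hr⟩ := exists_blocks_norm_pointDeriv_subpoly_top_lt (H := H) d m hδ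
    refine ⟨r, fun ι _ A hA φ hφ => ?_⟩
    obtain ⟨C, hC, hCdisj, hCsmall⟩ := hr A hA φ hφ
    set ψ := subpoly φ C
    set τ := homogeneousPart ψ (d + 1)
    have hψ : PointDegLE univ (d + 1) ψ := pointDegLE_subpoly hφ hCdisj (fun j => (hC j).2) univ
    obtain ⟨D, hD, hDdisj, hDsmall⟩ :=
      hm (Fin m) univ (by simp) (ψ - τ) hψ.sub_homogeneousPart
    refine ⟨fun j => (D j).biUnion C, fun j => ⟨(hD j).1.biUnion fun i _ => (hC i).1,
      biUnion_subset.2 fun i _ => (hC i).2⟩, pairwise_disjoint_biUnion hCdisj hDdisj,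
      fun J hJ => ?_⟩
    have hτ : ‖pointDeriv (subpoly τ D) ∅ J‖ ≤ ε / 2 := by
      have := norm_pointDeriv_subpoly_homogeneousPart_le hδ.le
        (fun S hS => (hCsmall S hS).le) hDdisj J
      rwa [Fintype.card_fin, mul_div_cancel₀ _ (by positivity)] at this
    have hsplit : subpoly φ (fun j => (D j).biUnion C) = subpoly (ψ - τ) D + subpoly τ D := by
      rw [← subpoly_subpoly]
      funext γ
      simp only [subpoly, Pi.add_apply, Pi.sub_apply, sub_add_cancel, ψ]
    rw [hsplit, pointDeriv_add]
    calc ‖pointDeriv (subpoly (ψ - τ) D) ∅ J + pointDeriv (subpoly τ D) ∅ J‖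
        ≤ ‖pointDeriv (subpoly (ψ - τ) D) ∅ J‖ + ‖pointDeriv (subpoly τ D) ∅ J‖ := norm_add_le _ _
      _ < ε / 2 + ε / 2 := add_lt_add_of_lt_of_le (hDsmall J hJ) hτ
      _ = ε := add_halves ε

theorem exists_qProducing {κ H : Type*} [DecidableEq κ] [AddCommGroup H] {d : ℕ}
    (ψ : Finset κ → H) (h0 : ψ ∅ = 0) (hψ : ∀ T : Finset κ, d < T.card → pointDeriv ψ ∅ T = 0) :
    ∃ Φ : (Fin d → κ) → H,
      (∀ γ, ψ γ = ∑ v ∈ piFinset fun _ => γ, Φ v) ∧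
      ∀ v, Φ v = 0 ∨ Φ v = pointDeriv ψ ∅ (univ.image v) := by
  obtain ⟨Φ, hΦ, hsum⟩ := exists_sum_eq_sum_image (fun v : Fin d → κ => univ.image v)
    (pointDeriv ψ ∅)
  refine ⟨Φ, fun γ => ?_, hΦ⟩
  have hsat : ∀ v v' : Fin d → κ, v ∈ piFinset (fun _ => γ) → univ.image v' = univ.image v →
      v' ∈ piFinset fun _ => γ := fun v v' hv h => mem_piFinset.2 fun i =>
    image_subset_iff.1 (h ▸ image_subset_iff.2 fun i _ => mem_piFinset.1 hv i) i (mem_univ i)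
  rw [hsum _ hsat, ← empty_union γ, ← sum_powerset_pointDeriv ψ, empty_union]
  refine (sum_subset (image_subset_iff.2 fun v hv => mem_powerset.2 (image_subset_iff.2
    fun i _ => mem_piFinset.1 hv i)) fun J hJ hJv => ?_).symm
  rcases J.eq_empty_or_nonempty with rfl | hJne
  · rw [pointDeriv_empty, h0]
  refine hψ J (not_le.1 fun hJd => hJv ?_)
  obtain ⟨v, rfl⟩ := exists_image_univ_eq hJne hJd
  exact mem_image_of_mem _ (mem_piFinset.2 fun i =>
    mem_powerset.1 hJ (mem_image_of_mem v (mem_univ i)))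

/-- Proposition: for any d, s ∈ ℕ and ε > 0 there is r such that every
`φ ∈ Pol⁰_d([r], 𝕋)` has a disjoint s-subcollection `B = {b 0, …, b (s-1)}` in `[r]`
such that the subpolynomial `φ↓_B` admits a q-producing function `Φ̂_B : B^d → 𝕋`
all of whose values are ε-close to 0. -/
theorem pol0_torus_subpolynomial_small_qproducing (d s : ℕ) (ε : ℝ) (hε : 0 < ε) :
    ∃ r : ℕ, ∀ φ : Finset ℕ → UnitAddCircle,
      Pol0 (Finset.Icc 1 r) d φ →
      ∃ b : Fin s → Finset ℕ,
        (∀ j, (b j).Nonempty ∧ b j ⊆ Finset.Icc 1 r) ∧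
        (∀ j j', j ≠ j' → Disjoint (b j) (b j')) ∧
        ∃ Φhat : (Fin d → Fin s) → UnitAddCircle,
          (∀ γ : Finset (Fin s),
            φ (γ.biUnion b) = ∑ v ∈ Fintype.piFinset (fun _ : Fin d => γ), Φhat v) ∧
          (∀ w : Fin d → Fin s, dist (Φhat w) 0 < ε) := by
  obtain ⟨r, hr⟩ := exists_blocks_norm_pointDeriv_subpoly_lt (H := UnitAddCircle) d s hε
  refine ⟨r, fun φ hφ => ?_⟩
  have hdeg := hφ.1.pointDegLE
  obtain ⟨b, hb, hbdisj, hsmall⟩ := hr ℕ (Icc 1 r) (by simp) φ hdeg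
  have hψ := pointDegLE_subpoly hdeg hbdisj (fun j => (hb j).2) univ
  have hψ0 : subpoly φ b ∅ = 0 := by simpa [subpoly] using hφ.2
  obtain ⟨Φ, hΦ, hΦval⟩ := exists_qProducing (subpoly φ b) hψ0 fun T hT =>
    hψ.pointDeriv_eq_zero (empty_subset _) (subset_univ T) (disjoint_empty_left T) hT
  refine ⟨b, hb, hbdisj, Φ, hΦ, fun w => ?_⟩
  rw [dist_zero_right]
  rcases hΦval w with h | h
  · rwa [h, norm_zero]
  rcases (univ.image w).eq_empty_or_nonempty with hJ | hJ
  · rwa [h, hJ, pointDeriv_empty, hψ0, norm_zero]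
  · exact h ▸ hsmall _ hJ
end

section
/- Let (X,ρ) be a compact metric space and let T : X → X be a homeomorphism such that the system (X,T) is minimal and distal. Suppose there exist points x_0 ≠ y_0 in X such that for every r ∈ ℕ and every δ > 0 there exist a point x ∈ X and integers n_1,…,n_r such that ρ(x, x_0) < δ and ρ(T^{n_{i_1}+⋯+n_{i_s}} x, y_0) < δ for all 1 ≤ s ≤ r and all 1 ≤ i_1 < ⋯ < i_s ≤ r. Then there exist a point x ∈ X and ε > 0 such that for every r ∈ ℕ there exist integers n_1,…,n_r with ρ(T^{n_{i_1}+⋯+n_{i_s}} x, x) > ε for all 1 ≤ s ≤ r and all 1 ≤ i_1 < ⋯ < i_s ≤ r; in particular, the system (X,T) is not IP₀*-recurrent. -/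
/-!
Let `c > 0` bound `dist (Tⁿ x₀) (Tⁿ y₀)` from below and `ε = c/3`. If no point escaped its
`ε`-ball along a whole IP_r-set, for some `r`, every point would lie in one of the closed sets
`ipReturnSet T r ε`, so by Baire one of them contains an open set `U`. By minimality and compactness
the orbit of every point enters `U` at some time from a fixed finite set `F`, and the maps `Tᵐ`,
`m ∈ F`, are uniformly equicontinuous. Pick `x` close to `x₀` whose IP_r-sums all take it close to
`y₀`, and `m ∈ F` with `Tᵐ x ∈ U`: one of these sums returns `Tᵐ x` to within `ε` of itself, and
then `Tᵐ x₀` and `Tᵐ y₀` are less than `3ε = c` apart.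
-/

namespace Homeomorph

variable {X : Type*} [TopologicalSpace X]

theorem toEquiv_zpow (T : X ≃ₜ X) (m : ℤ) : (T ^ m).toEquiv = T.toEquiv ^ m :=
  map_zpow (⟨⟨toEquiv, rfl⟩, fun _ _ => rfl⟩ : (X ≃ₜ X) →* Equiv.Perm X) T m

theorem continuous_toEquiv_zpow (T : X ≃ₜ X) (m : ℤ) : Continuous ⇑(T.toEquiv ^ m) := by
  rw [← toEquiv_zpow]
  exact (T ^ m).continuous

end Homeomorph

theorem exists_finset_zpow_mem_of_dense_orbit {X : Type*} [TopologicalSpace X] [CompactSpace X]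
    (T : X ≃ₜ X)
    (hmin : ∀ x : X, Dense (Set.range fun n : ℤ => (T.toEquiv ^ n) x))
    {U : Set X} (hU : IsOpen U) (hne : U.Nonempty) :
    ∃ F : Finset ℤ, ∀ x, ∃ m ∈ F, (T.toEquiv ^ m) x ∈ U := by
  have hcover : Set.univ ⊆ ⋃ m : ℤ, ⇑(T.toEquiv ^ m) ⁻¹' U := fun x _ => by
    obtain ⟨_, ⟨m, rfl⟩, hm⟩ := (hmin x).exists_mem_open hU hne
    exact Set.mem_iUnion.2 ⟨m, hm⟩
  obtain ⟨F, hF⟩ := isCompact_univ.elim_finite_subcover _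
    (fun m => hU.preimage (T.continuous_toEquiv_zpow m)) hcover
  exact ⟨F, fun x => by simpa using hF (Set.mem_univ x)⟩

section IPReturns

variable {X : Type*} [MetricSpace X]

/-- `x ∈ ipReturnSet T r ε` says that the times at which `x` returns to the closed `ε`-ball
around itself form an IP*_r-set. -/
def ipReturnSet (T : X ≃ₜ X) (r : ℕ) (ε : ℝ) : Set X :=
  {x | ∀ n : Fin r → ℤ, ∃ α : Finset (Fin r), α.Nonempty ∧
    dist ((T.toEquiv ^ (∑ i ∈ α, n i)) x) x ≤ ε}

theorem isClosed_ipReturnSet (T : X ≃ₜ X) (r : ℕ) (ε : ℝ) : IsClosed (ipReturnSet T r ε) := by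
  simp only [ipReturnSet, Set.ofPred_forall, Set.ofPred_exists, Set.ofPred_and]
  refine isClosed_iInter fun n => isClosed_iUnion_of_finite fun α => isClosed_const.inter ?_
  exact isClosed_le ((T.continuous_toEquiv_zpow _).dist continuous_id) continuous_const

theorem exists_zpow_dist_lt_of_forall_mem_ipReturnSet [CompactSpace X] (T : X ≃ₜ X)
    (hmin : ∀ x : X, Dense (Set.range fun n : ℤ => (T.toEquiv ^ n) x))
    {ε : ℝ} (hε : 0 < ε) (hret : ∀ x, ∃ r, x ∈ ipReturnSet T r ε) (x₀ y₀ : X)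
    (hRP : ∀ r : ℕ, ∀ δ : ℝ, 0 < δ → ∃ x : X, ∃ n : Fin r → ℤ,
      dist x x₀ < δ ∧ ∀ α : Finset (Fin r), α.Nonempty →
        dist ((T.toEquiv ^ (∑ i ∈ α, n i)) x) y₀ < δ) :
    ∃ m : ℤ, dist ((T.toEquiv ^ m) x₀) ((T.toEquiv ^ m) y₀) < 3 * ε := by
  have : Nonempty X := ⟨x₀⟩
  obtain ⟨r, hr⟩ := nonempty_interior_of_iUnion_of_closed (isClosed_ipReturnSet T · ε)
    (Set.iUnion_eq_univ_iff.2 hret)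
  obtain ⟨F, hF⟩ := exists_finset_zpow_mem_of_dense_orbit T hmin isOpen_interior hr
  have hequi : UniformEquicontinuous fun m : F => ⇑(T.toEquiv ^ (m : ℤ)) :=
    uniformEquicontinuous_finite.2 fun m =>
      CompactSpace.uniformContinuous_of_continuous (T.continuous_toEquiv_zpow m)
  obtain ⟨δ, hδ, hδF⟩ := Metric.uniformEquicontinuous_iff.1 hequi ε hε
  obtain ⟨x, n, hx, hn⟩ := hRP r δ hδ
  obtain ⟨m, hmF, hmx⟩ := hF x
  obtain ⟨α, hα, hreturn⟩ := interior_subset hmx n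
  set s := ∑ i ∈ α, n i
  have hcomm : (T.toEquiv ^ s) ((T.toEquiv ^ m) x) = (T.toEquiv ^ m) ((T.toEquiv ^ s) x) := by
    rw [← Equiv.Perm.mul_apply, ← Equiv.Perm.mul_apply, ← zpow_add, ← zpow_add, add_comm]
  have hnear_x₀ : dist ((T.toEquiv ^ m) x₀) ((T.toEquiv ^ m) x) < ε :=
    hδF _ _ (dist_comm x x₀ ▸ hx) ⟨m, hmF⟩
  have hnear_self : dist ((T.toEquiv ^ m) x) ((T.toEquiv ^ m) ((T.toEquiv ^ s) x)) ≤ ε := by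
    rwa [dist_comm, ← hcomm]
  have hnear_y₀ : dist ((T.toEquiv ^ m) ((T.toEquiv ^ s) x)) ((T.toEquiv ^ m) y₀) < ε :=
    hδF _ _ (hn α hα) ⟨m, hmF⟩
  refine ⟨m, ?_⟩
  calc dist ((T.toEquiv ^ m) x₀) ((T.toEquiv ^ m) y₀)
      ≤ dist ((T.toEquiv ^ m) x₀) ((T.toEquiv ^ m) x)
        + dist ((T.toEquiv ^ m) x) ((T.toEquiv ^ m) ((T.toEquiv ^ s) x))
        + dist ((T.toEquiv ^ m) ((T.toEquiv ^ s) x)) ((T.toEquiv ^ m) y₀) := dist_triangle4 ..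
    _ < ε + ε + ε := add_lt_add (add_lt_add_of_lt_of_le hnear_x₀ hnear_self) hnear_y₀
    _ = 3 * ε := by ring

end IPReturns

/-- Let (X,ρ) be a compact metric space and T a self-homeomorphism such that
(X,T) is minimal and distal. If there are points x₀ ≠ y₀ such that for every
r ∈ ℕ and δ > 0 there are x ∈ X and integers n_1,…,n_r with ρ(x,x₀) < δ and
ρ(T^{n_{i_1}+⋯+n_{i_s}} x, y₀) < δ for all nonempty subsets {i_1 < ⋯ < i_s} of
{1,…,r}, then there are a point x ∈ X and ε > 0 such that for every r there are
integers n_1,…,n_r with ρ(T^{n_{i_1}+⋯+n_{i_s}} x, x) > ε for all nonempty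
subsets; in particular, the system (X,T) is not IP₀*-recurrent. -/
theorem regionally_proximal_pair_implies_not_IP0star_recurrent
    {X : Type*} [MetricSpace X] [CompactSpace X] (T : X ≃ₜ X)
    (hmin : ∀ x : X, Dense (Set.range fun n : ℤ => (T.toEquiv ^ n) x))
    (hdistal : ∀ x y : X, x ≠ y →
      ∃ c : ℝ, 0 < c ∧ ∀ n : ℤ, c ≤ dist ((T.toEquiv ^ n) x) ((T.toEquiv ^ n) y))
    (x₀ y₀ : X) (hne : x₀ ≠ y₀)
    (hRP : ∀ r : ℕ, ∀ δ : ℝ, 0 < δ → ∃ x : X, ∃ n : Fin r → ℤ,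
      dist x x₀ < δ ∧ ∀ α : Finset (Fin r), α.Nonempty →
        dist ((T.toEquiv ^ (∑ i ∈ α, n i)) x) y₀ < δ) :
    (∃ x : X, ∃ ε : ℝ, 0 < ε ∧ ∀ r : ℕ, ∃ n : Fin r → ℤ,
      ∀ α : Finset (Fin r), α.Nonempty →
        ε < dist ((T.toEquiv ^ (∑ i ∈ α, n i)) x) x) ∧
    ¬ (∀ (x : X) (U : Set X), IsOpen U → x ∈ U →
        ∃ r : ℕ, ∀ n : Fin r → ℤ, ∃ α : Finset (Fin r), α.Nonempty ∧
          (T.toEquiv ^ (∑ i ∈ α, n i)) x ∈ U) := by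
  obtain ⟨c, hc, hsep⟩ := hdistal x₀ y₀ hne
  have escape : ∃ x : X, ∃ ε : ℝ, 0 < ε ∧ ∀ r : ℕ, ∃ n : Fin r → ℤ,
      ∀ α : Finset (Fin r), α.Nonempty → ε < dist ((T.toEquiv ^ (∑ i ∈ α, n i)) x) x := by
    by_contra! hret
    obtain ⟨m, hm⟩ := exists_zpow_dist_lt_of_forall_mem_ipReturnSet T hmin (by positivity)
      (fun x => hret x (c / 3) (by positivity)) x₀ y₀ hRP
    linarith [hsep m]
  refine ⟨escape, fun hrec => ?_⟩
  obtain ⟨x, ε, hε, hx⟩ := escape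
  obtain ⟨r, hr⟩ := hrec x (Metric.ball x ε) Metric.isOpen_ball (Metric.mem_ball_self hε)
  obtain ⟨n, hn⟩ := hx r
  obtain ⟨α, hα, hmem⟩ := hr n
  exact (hn α hα).not_gt (Metric.mem_ball.1 hmem)
end

section
/- Let S = ⋃_{r=1}^∞ S_r ⊆ ℕ, where S_r = {j·2^{2^r} : j = 1,…,r}. Then (i) for every r ∈ ℕ the set S contains an IP_r-set (indeed S_r is the IP_r-set generated by the r-element sequence n_1 = ⋯ = n_r = 2^{2^r}), and (ii) S contains no IP-set, i.e., there is no infinite sequence (n_i) of integers all of whose finite sums of distinct terms lie in S. Consequently, the complement ℤ∖S is an IP*-set that is not an IP₀*-set. -/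
open Finset

/-!
The blocks `S_r` occupy the disjoint ranges `[2 ^ 2 ^ r, 2 ^ 2 ^ (r + 1))`, and `2 ^ 2 ^ r` divides
every element of a block of level at least `r`. If all finite sums of a sequence lay in
`S = ⋃ r, S_r`, two terms from different blocks would add up to an element of the higher block,
forcing its base to divide the smaller term; so all terms lie in a single block `S_r`, and then the
sum of `r + 1` of them is `c * 2 ^ 2 ^ r` with `r < c < 2 ^ 2 ^ r`, which lies in no block.
-/

/-- The paper's `S_r`. -/
def blockSet (r : ℕ) : Set ℤ := {x | ∃ j : ℕ, 1 ≤ j ∧ j ≤ r ∧ x = j * 2 ^ 2 ^ r}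

lemma strictMono_two_pow_two_pow : StrictMono fun r : ℕ => (2 : ℤ) ^ 2 ^ r :=
  (pow_right_strictMono₀ one_lt_two).comp (pow_right_strictMono₀ one_lt_two)

lemma two_pow_two_pow_succ (r : ℕ) : (2 : ℤ) ^ 2 ^ (r + 1) = 2 ^ 2 ^ r * 2 ^ 2 ^ r := by
  rw [pow_succ, pow_mul, sq]

lemma succ_mul_lt_two_pow_two_pow (r : ℕ) : (r + 1) * r < 2 ^ 2 ^ r := by
  induction r with
  | zero => norm_num
  | succ r ih =>
    have hB : 2 ≤ 2 ^ 2 ^ r := Nat.le_self_pow (by positivity) 2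
    rw [pow_succ, pow_mul, sq]
    rcases Nat.eq_zero_or_pos r with rfl | hr
    · norm_num
    · nlinarith

lemma natCast_lt_two_pow_two_pow (r : ℕ) : (r : ℤ) < 2 ^ 2 ^ r := by
  exact_mod_cast r.lt_two_pow_self.trans (2 ^ r).lt_two_pow_self

section blockSet

variable {x y : ℤ} {r σ : ℕ}

lemma two_pow_two_pow_le_of_mem_blockSet (hx : x ∈ blockSet r) : 2 ^ 2 ^ r ≤ x := by
  obtain ⟨j, hj, -, rfl⟩ := hx
  exact le_mul_of_one_le_left (by positivity) (by exact_mod_cast hj)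

lemma lt_two_pow_two_pow_succ_of_mem_blockSet (hx : x ∈ blockSet r) : x < 2 ^ 2 ^ (r + 1) := by
  obtain ⟨j, -, hjr, rfl⟩ := hx
  rw [two_pow_two_pow_succ]
  gcongr
  exact (Nat.cast_le.2 hjr).trans_lt (natCast_lt_two_pow_two_pow r)

lemma le_of_two_pow_two_pow_le_of_mem_blockSet (hx : x ∈ blockSet σ) (h : 2 ^ 2 ^ r ≤ x) :
    r ≤ σ :=
  Nat.lt_succ_iff.1 <| strictMono_two_pow_two_pow.lt_iff_lt.1 <|
    h.trans_lt (lt_two_pow_two_pow_succ_of_mem_blockSet hx)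

lemma le_of_lt_two_pow_two_pow_succ_of_mem_blockSet (hx : x ∈ blockSet σ)
    (h : x < 2 ^ 2 ^ (r + 1)) : σ ≤ r :=
  Nat.lt_succ_iff.1 <| strictMono_two_pow_two_pow.lt_iff_lt.1 <|
    (two_pow_two_pow_le_of_mem_blockSet hx).trans_lt h

lemma two_pow_two_pow_dvd_of_mem_blockSet (hx : x ∈ blockSet σ) (h : r ≤ σ) :
    2 ^ 2 ^ r ∣ x := by
  obtain ⟨j, -, -, rfl⟩ := hx
  exact (pow_dvd_pow 2 (Nat.pow_le_pow_right two_pos h)).mul_left _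

/-- The sum would lie in a block of level at least `τ`, so `2 ^ 2 ^ τ` would divide it, hence
divide the positive but smaller `x`. -/
lemma add_notMem_blockSet_of_lt {ρ τ : ℕ} (hx : x ∈ blockSet ρ) (hy : y ∈ blockSet τ)
    (hρτ : ρ < τ) : x + y ∉ blockSet σ := by
  intro hxy
  have hx0 : 0 < x := lt_of_lt_of_le (by positivity) (two_pow_two_pow_le_of_mem_blockSet hx)
  have hτσ : τ ≤ σ := le_of_two_pow_two_pow_le_of_mem_blockSet hxy <| by
    linarith [two_pow_two_pow_le_of_mem_blockSet hy]
  have hdvd : 2 ^ 2 ^ τ ∣ x := (dvd_add_left (two_pow_two_pow_dvd_of_mem_blockSet hy le_rfl)).1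
    (two_pow_two_pow_dvd_of_mem_blockSet hxy hτσ)
  have hlt : x < 2 ^ 2 ^ τ := (lt_two_pow_two_pow_succ_of_mem_blockSet hx).trans_le
    (strictMono_two_pow_two_pow.monotone hρτ)
  exact (Int.le_of_dvd hx0 hdvd).not_gt hlt

lemma eq_of_add_mem_blockSet {ρ τ : ℕ} (hx : x ∈ blockSet ρ) (hy : y ∈ blockSet τ)
    (hxy : x + y ∈ blockSet σ) : ρ = τ := by
  rcases lt_trichotomy ρ τ with h | h | h
  · exact absurd hxy (add_notMem_blockSet_of_lt hx hy h)
  · exact h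
  · exact absurd (add_comm x y ▸ hxy) (add_notMem_blockSet_of_lt hy hx h)

lemma le_of_mul_mem_blockSet {c : ℕ} (hc : c < 2 ^ 2 ^ r)
    (h : (c : ℤ) * 2 ^ 2 ^ r ∈ blockSet σ) : c ≤ r := by
  have hc0 : 0 < c := by
    have := (two_pow_two_pow_le_of_mem_blockSet h).trans_lt' (by positivity : (0 : ℤ) < 2 ^ 2 ^ σ)
    exact_mod_cast pos_of_mul_pos_left this (by positivity)
  have hσ : σ = r := le_antisymm
    (le_of_lt_two_pow_two_pow_succ_of_mem_blockSet h <| by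
      rw [two_pow_two_pow_succ]; gcongr; exact_mod_cast hc)
    (le_of_two_pow_two_pow_le_of_mem_blockSet h <|
      le_mul_of_one_le_left (by positivity) (by exact_mod_cast hc0))
  subst hσ
  obtain ⟨j, -, hjσ, hcj⟩ := h
  have : c = j := by exact_mod_cast mul_right_cancel₀ (by positivity) hcj
  omega

/-- The sum is `c * 2 ^ 2 ^ r` with `r < c < 2 ^ 2 ^ r`. -/
lemma sum_notMem_blockSet {ι : Type*} {s : Finset ι} {n : ι → ℤ} (hs : s.card = r + 1)
    (h : ∀ i ∈ s, n i ∈ blockSet r) : ∑ i ∈ s, n i ∉ blockSet σ := by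
  choose! j hj1 hjr hnj using h
  have hsum : ∑ i ∈ s, n i = ((∑ i ∈ s, j i : ℕ) : ℤ) * 2 ^ 2 ^ r := by
    push_cast [sum_mul]
    exact sum_congr rfl hnj
  have hlow : r + 1 ≤ ∑ i ∈ s, j i := by
    simpa [hs] using card_nsmul_le_sum s j 1 hj1
  have hhigh : ∑ i ∈ s, j i ≤ (r + 1) * r := by
    simpa [hs] using sum_le_card_nsmul s j r hjr
  rw [hsum]
  intro hmem
  have := le_of_mul_mem_blockSet (hhigh.trans_lt (succ_mul_lt_two_pow_two_pow r)) hmem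
  omega

end blockSet

lemma sum_const_mem_blockSet {r : ℕ} {α : Finset (Fin r)} (hα : α.Nonempty) :
    ∑ _i ∈ α, (2 : ℤ) ^ 2 ^ r ∈ blockSet r :=
  ⟨α.card, hα.card_pos, card_le_univ α |>.trans_eq (Fintype.card_fin r), by simp⟩

lemma not_forall_sum_mem_iUnion_blockSet (n : ℕ → ℤ) :
    ¬ ∀ α : Finset ℕ, α.Nonempty → ∑ i ∈ α, n i ∈ ⋃ r, blockSet r := by
  intro hn
  have hmem (α : Finset ℕ) (hα : α.Nonempty) : ∃ r, ∑ i ∈ α, n i ∈ blockSet r :=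
    Set.mem_iUnion.1 (hn α hα)
  choose R hR using fun i => hmem {i} (singleton_nonempty i)
  simp only [sum_singleton] at hR
  have hlevel (i : ℕ) : R i = R 0 := by
    rcases eq_or_ne i 0 with rfl | hi
    · rfl
    obtain ⟨σ, hσ⟩ := hmem {i, 0} (insert_nonempty _ _)
    rw [sum_pair hi] at hσ
    exact eq_of_add_mem_blockSet (hR i) (hR 0) hσ
  obtain ⟨σ, hσ⟩ := hmem (range (R 0 + 1)) nonempty_range_add_one
  exact sum_notMem_blockSet (card_range _) (fun i _ => hlevel i ▸ hR i) hσ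

/-- Let `S = ⋃_{r ≥ 1} S_r ⊆ ℤ` where `S_r = {j·2^{2^r} : j = 1,…,r}`. Then:
(i) for every r, `S` contains an IP_r-set — indeed the IP_r-set generated by the
r-element constant sequence `n_i = 2^{2^r}` lies in `S`;
(ii) `S` contains no IP-set: there is no infinite sequence of integers all of
whose finite sums of distinct terms lie in `S`.
Consequently, `ℤ ∖ S` is an IP*-set (it meets every IP-set) which is not an
IP₀*-set (for every r there is an IP_r-set it misses). -/
theorem IPstar_set_not_IP0star_set (S : Set ℤ)
    (hS : S = {x : ℤ | ∃ r j : ℕ, 1 ≤ j ∧ j ≤ r ∧ x = (j : ℤ) * 2 ^ (2 ^ r)}) :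
    (∀ r : ℕ, ∃ n : Fin r → ℤ, (∀ i, n i = 2 ^ (2 ^ r)) ∧
      ∀ α : Finset (Fin r), α.Nonempty → (∑ i ∈ α, n i) ∈ S) ∧
    (¬ ∃ n : ℕ → ℤ, ∀ α : Finset ℕ, α.Nonempty → (∑ i ∈ α, n i) ∈ S) ∧
    (∀ n : ℕ → ℤ, ∃ α : Finset ℕ, α.Nonempty ∧ (∑ i ∈ α, n i) ∈ Sᶜ) ∧
    (¬ ∃ r : ℕ, ∀ n : Fin r → ℤ, ∃ α : Finset (Fin r), α.Nonempty ∧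
      (∑ i ∈ α, n i) ∈ Sᶜ) := by
  have hS' : S = ⋃ r, blockSet r := by
    ext x
    simp [hS, blockSet]
  have hIP (r : ℕ) (α : Finset (Fin r)) (hα : α.Nonempty) : ∑ _i ∈ α, (2 : ℤ) ^ 2 ^ r ∈ S :=
    hS' ▸ Set.mem_iUnion_of_mem r (sum_const_mem_blockSet hα)
  have hnoIP (n : ℕ → ℤ) : ¬ ∀ α : Finset ℕ, α.Nonempty → ∑ i ∈ α, n i ∈ S :=
    hS' ▸ not_forall_sum_mem_iUnion_blockSet n
  refine ⟨fun r => ⟨_, fun _ => rfl, hIP r⟩, fun ⟨n, hn⟩ => hnoIP n hn, fun n => ?_,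
    fun ⟨r, hr⟩ => ?_⟩
  · by_contra! h
    exact hnoIP n fun α hα => by simpa using h α hα
  · obtain ⟨α, hα, hαS⟩ := hr fun _ => 2 ^ 2 ^ r
    exact hαS (hIP r α hα)
end
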